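/- arXiv:math/0608646 — 5 statements merged into one kernel-verified Lean document; each statement's English description precedes it below -/
import Mathlib

section
/- Let 1 → A →α B →β C → 1 be a short exact sequence of groups, i.e. α : A → B is an injective group homomorphism, β : B → C is a surjective group homomorphism, and the range of α equals the kernel of β. Suppose P_A is a positive cone on A and P_C is a positive cone on C. Then the set P_B := α(P_A) ∪ β⁻¹(P_C) is a positive cone on B; in particular B is left-orderable. -/
/-- A positive cone on a group `G`: a subset `P` closed under multiplication such that
`G` is the disjoint union of `P`, `{1}` and `P⁻¹`. -/
def IsPositiveCone {G : Type*} [Group G] (P : Set G) : Prop :=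
  (∀ a ∈ P, ∀ b ∈ P, a * b ∈ P) ∧
  (∀ g : G, g ∈ P ∨ g = 1 ∨ g⁻¹ ∈ P) ∧
  (1 : G) ∉ P ∧
  (∀ g ∈ P, g⁻¹ ∉ P)

/-!
`lexCone α β PA PC` is the lexicographic cone: an element of `B` is compared first through its
image in `C`, and only when that image is trivial, i.e. the element lies in `α(A)`, through its
preimage in `A`. The cone axioms are checked piece by piece; mixed products and inverses are
decided in `C`, because `β ∘ α = 1`.
-/

namespace IsPositiveCone

variable {G : Type*} [Group G] {P : Set G}

theorem mul_mem (h : IsPositiveCone P) {a b : G} (ha : a ∈ P) (hb : b ∈ P) : a * b ∈ P :=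
  h.1 a ha b hb

theorem mem_or_eq_one_or_inv_mem (h : IsPositiveCone P) (g : G) : g ∈ P ∨ g = 1 ∨ g⁻¹ ∈ P :=
  h.2.1 g

theorem one_notMem (h : IsPositiveCone P) : (1 : G) ∉ P :=
  h.2.2.1

theorem inv_notMem (h : IsPositiveCone P) {g : G} (hg : g ∈ P) : g⁻¹ ∉ P :=
  h.2.2.2 g hg

theorem exists_linearOrder (h : IsPositiveCone P) :
    ∃ lo : LinearOrder G, ∀ a b c : G, lo.lt a b → lo.lt (c * a) (c * b) := by
  let r : G → G → Prop := fun a b => a⁻¹ * b ∈ P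
  have : IsStrictTotalOrder G r :=
    { trichotomous := fun a b hab hba => by
        rcases h.mem_or_eq_one_or_inv_mem (a⁻¹ * b) with hp | he | hn
        · exact absurd hp hab
        · exact inv_mul_eq_one.mp he
        · exact absurd (by simpa [r] using hn) hba
      irrefl := fun a => by simpa [r] using h.one_notMem
      trans := fun a b c hab hbc => by simpa [r, mul_assoc] using h.mul_mem hab hbc }
  classical
  refine ⟨linearOrderOfSTO r, fun a b c (hab : a⁻¹ * b ∈ P) => ?_⟩
  show (c * a)⁻¹ * (c * b) ∈ P
  rwa [mul_inv_rev, mul_assoc, inv_mul_cancel_left]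

end IsPositiveCone

section LexCone

variable {A B C : Type*} [Group A] [Group B] [Group C]

def lexCone (α : A →* B) (β : B →* C) (PA : Set A) (PC : Set C) : Set B :=
  α '' PA ∪ β ⁻¹' PC

variable {α : A →* B} {β : B →* C} {PA : Set A} {PC : Set C}

theorem lexCone_mul_mem (hαβ : α.range ≤ β.ker) (hPA : IsPositiveCone PA)
    (hPC : IsPositiveCone PC) {x y : B} (hx : x ∈ lexCone α β PA PC)
    (hy : y ∈ lexCone α β PA PC) : x * y ∈ lexCone α β PA PC := by
  have hβα (a : A) : β (α a) = 1 := hαβ ⟨a, rfl⟩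
  rcases hx with ⟨a, ha, rfl⟩ | hx <;> rcases hy with ⟨b, hb, rfl⟩ | hy
  · exact Or.inl ⟨a * b, hPA.mul_mem ha hb, map_mul α a b⟩
  · exact Or.inr (by simpa [Set.mem_preimage, hβα] using hy)
  · exact Or.inr (by simpa [Set.mem_preimage, hβα] using hx)
  · exact Or.inr (by simpa [Set.mem_preimage] using hPC.mul_mem hx hy)

theorem mem_lexCone_or_eq_one_or_inv_mem (hβα : β.ker ≤ α.range) (hPA : IsPositiveCone PA)
    (hPC : IsPositiveCone PC) (g : B) :
    g ∈ lexCone α β PA PC ∨ g = 1 ∨ g⁻¹ ∈ lexCone α β PA PC := by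
  rcases hPC.mem_or_eq_one_or_inv_mem (β g) with hp | he | hn
  · exact Or.inl (Or.inr hp)
  · obtain ⟨a, rfl⟩ := hβα he
    rcases hPA.mem_or_eq_one_or_inv_mem a with hp | rfl | hn
    · exact Or.inl (Or.inl ⟨a, hp, rfl⟩)
    · exact Or.inr (Or.inl (map_one α))
    · exact Or.inr (Or.inr (Or.inl ⟨a⁻¹, hn, map_inv α a⟩))
  · exact Or.inr (Or.inr (Or.inr (by simpa using hn)))

theorem one_notMem_lexCone (hα : Function.Injective α) (hPA : IsPositiveCone PA)
    (hPC : IsPositiveCone PC) : (1 : B) ∉ lexCone α β PA PC := by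
  rintro (⟨a, ha, ha1⟩ | h1)
  · exact hPA.one_notMem ((hα (ha1.trans (map_one α).symm)) ▸ ha)
  · exact hPC.one_notMem (by simpa using h1)

theorem lexCone_inv_notMem (hα : Function.Injective α) (hαβ : α.range ≤ β.ker)
    (hPA : IsPositiveCone PA) (hPC : IsPositiveCone PC) {g : B}
    (hg : g ∈ lexCone α β PA PC) : g⁻¹ ∉ lexCone α β PA PC := by
  have hβα (a : A) : β (α a) = 1 := hαβ ⟨a, rfl⟩
  rcases hg with ⟨a, ha, rfl⟩ | hg
  · rintro (⟨b, hb, hb1⟩ | hg')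
    · exact hPA.inv_notMem ha (hα (hb1.trans (map_inv α a).symm) ▸ hb)
    · exact hPC.one_notMem (by simpa [hβα] using hg')
  · rintro (⟨b, hb, hb1⟩ | hg')
    · have : β g = 1 := inv_eq_one.mp (by rw [← map_inv, ← hb1, hβα])
      exact hPC.one_notMem (this ▸ hg)
    · exact hPC.inv_notMem hg (by simpa using hg')

theorem isPositiveCone_lexCone (hα : Function.Injective α) (hexact : α.range = β.ker)
    (hPA : IsPositiveCone PA) (hPC : IsPositiveCone PC) :
    IsPositiveCone (lexCone α β PA PC) :=
  ⟨fun _ hx _ hy => lexCone_mul_mem hexact.le hPA hPC hx hy,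
    mem_lexCone_or_eq_one_or_inv_mem hexact.ge hPA hPC,
    one_notMem_lexCone hα hPA hPC,
    fun _ hg => lexCone_inv_notMem hα hexact.le hPA hPC hg⟩

end LexCone

theorem positiveCone_of_short_exact_sequence_general
    {A B C : Type*} [Group A] [Group B] [Group C]
    (α : A →* B) (β : B →* C)
    (hα : Function.Injective α)
    (hexact : α.range = β.ker)
    (PA : Set A) (PC : Set C)
    (hPA : IsPositiveCone PA) (hPC : IsPositiveCone PC) :
    IsPositiveCone ((⇑α) '' PA ∪ (⇑β) ⁻¹' PC) ∧
      ∃ lo : LinearOrder B, ∀ a b c : B, lo.lt a b → lo.lt (c * a) (c * b) := by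
  have hcone : IsPositiveCone (lexCone α β PA PC) := isPositiveCone_lexCone hα hexact hPA hPC
  exact ⟨hcone, hcone.exists_linearOrder⟩

/-- Given a short exact sequence `1 → A → B → C → 1` and positive cones `P_A` on `A` and
`P_C` on `C`, the set `α(P_A) ∪ β⁻¹(P_C)` is a positive cone on `B`; in particular `B`
is left-orderable. -/
theorem positiveCone_of_short_exact_sequence
    {A B C : Type*} [Group A] [Group B] [Group C]
    (α : A →* B) (β : B →* C)
    (hα : Function.Injective α) (hβ : Function.Surjective β)
    (hexact : α.range = β.ker)
    (PA : Set A) (PC : Set C)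
    (hPA : IsPositiveCone PA) (hPC : IsPositiveCone PC) :
    IsPositiveCone ((⇑α) '' PA ∪ (⇑β) ⁻¹' PC) ∧
      ∃ lo : LinearOrder B, ∀ a b c : B, lo.lt a b → lo.lt (c * a) (c * b) :=
  positiveCone_of_short_exact_sequence_general α β hα hexact PA PC hPA hPC
end

section
/- For every n ≥ 1, the free group F_n on n generators (FreeGroup (Fin n)) is bi-orderable: it admits a linear order < such that a < b implies ca < cb and ac < bc for all elements a, b, c. Equivalently, F_n possesses a conjugation-invariant positive cone. -/
set_option linter.unusedSectionVars false
namespace FGO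
open Finset

structure Ser (α : Type*) where
  co : List α → ℤ

namespace Ser

variable {α : Type*} [DecidableEq α]

theorem ext' {f g : Ser α} (h : ∀ w, f.co w = g.co w) : f = g := by
  cases f; cases g; simp only [mk.injEq]; funext w; exact h w

instance : Add (Ser α) := ⟨fun f g => ⟨fun w => f.co w + g.co w⟩⟩
instance : Neg (Ser α) := ⟨fun f => ⟨fun w => -f.co w⟩⟩
instance : Zero (Ser α) := ⟨⟨fun _ => 0⟩⟩

@[simp] theorem co_add (f g : Ser α) (w) : (f + g).co w = f.co w + g.co w := rfl
@[simp] theorem co_neg (f : Ser α) (w) : (-f).co w = -f.co w := rfl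
@[simp] theorem co_zero (w : List α) : (0 : Ser α).co w = 0 := rfl

instance : AddCommGroup (Ser α) where
  add_assoc f g h := ext' fun w => add_assoc _ _ _
  zero_add f := ext' fun w => zero_add _
  add_zero f := ext' fun w => add_zero _
  add_comm f g := ext' fun w => add_comm _ _
  neg_add_cancel f := ext' fun w => neg_add_cancel _
  nsmul := nsmulRec
  zsmul := zsmulRec

instance : One (Ser α) := ⟨⟨fun w => if w = [] then 1 else 0⟩⟩
instance : Mul (Ser α) :=
  ⟨fun f g => ⟨fun w => ∑ k ∈ range (w.length + 1), f.co (w.take k) * g.co (w.drop k)⟩⟩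

@[simp] theorem co_one (w : List α) : (1 : Ser α).co w = if w = [] then 1 else 0 := rfl
theorem co_mul (f g : Ser α) (w) :
    (f * g).co w = ∑ k ∈ range (w.length + 1), f.co (w.take k) * g.co (w.drop k) := rfl

theorem one_mul' (f : Ser α) : 1 * f = f := by
  refine ext' fun w => ?_
  rw [co_mul, Finset.sum_eq_single 0]
  · simp
  · intro k hk hk0
    rw [co_one, if_neg, zero_mul]
    simp only [List.take_eq_nil_iff]
    rintro (h | h)
    · exact hk0 h
    · subst h; simp at hk; omega
  · intro h; simp at h

theorem mul_one' (f : Ser α) : f * 1 = f := by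
  refine ext' fun w => ?_
  rw [co_mul, Finset.sum_eq_single w.length]
  · simp
  · intro k hk hk0
    rw [co_one, if_neg, mul_zero]
    simp only [List.drop_eq_nil_iff]
    simp at hk; omega
  · intro h; simp at h

theorem mul_assoc' (f g h : Ser α) : f * g * h = f * (g * h) := by
  refine ext' fun w => ?_
  rw [co_mul, co_mul]
  simp only [co_mul, Finset.sum_mul, Finset.mul_sum]
  rw [Finset.sum_sigma']
  rw [Finset.sum_sigma']
  refine Finset.sum_nbij' (fun p => ⟨p.2, p.1 - p.2⟩) (fun p => ⟨p.1 + p.2, p.1⟩) ?_ ?_ ?_ ?_ ?_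
  · rintro ⟨j, k⟩ hjk
    simp only [Finset.mem_sigma, Finset.mem_range, List.length_take, List.length_drop] at hjk ⊢
    omega
  · rintro ⟨k, m⟩ hkm
    simp only [Finset.mem_sigma, Finset.mem_range, List.length_take, List.length_drop] at hkm ⊢
    omega
  · rintro ⟨j, k⟩ hjk
    simp only [Finset.mem_sigma, Finset.mem_range, List.length_take, List.length_drop] at hjk
    have hk : k + (j - k) = j := by omega
    simp [hk]
  · rintro ⟨k, m⟩ hkm
    simp
  · rintro ⟨j, k⟩ hjk
    simp only [Finset.mem_sigma, Finset.mem_range, List.length_take, List.length_drop] at hjk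
    have hk : k ≤ j := by omega
    have h1 : (w.take j).take k = w.take k := by
      rw [List.take_take]; congr 1; omega
    have h2 : (w.take j).drop k = (w.drop k).take (j - k) := by
      rw [List.drop_take]
    have h3 : w.drop j = (w.drop k).drop (j - k) := by
      rw [List.drop_drop]; congr 1; omega
    rw [h1, h2, h3, mul_assoc]

theorem left_distrib' (f g h : Ser α) : f * (g + h) = f * g + f * h := by
  refine ext' fun w => ?_
  simp only [co_mul, co_add, mul_add, ← Finset.sum_add_distrib]

theorem right_distrib' (f g h : Ser α) : (f + g) * h = f * h + g * h := by
  refine ext' fun w => ?_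
  simp only [co_mul, co_add, add_mul, ← Finset.sum_add_distrib]

instance : Ring (Ser α) :=
  { (inferInstance : AddCommGroup (Ser α)), (inferInstance : One (Ser α)),
    (inferInstance : Mul (Ser α)) with
    left_distrib := left_distrib'
    right_distrib := right_distrib'
    zero_mul := fun f => ext' fun w => by simp [co_mul]
    mul_zero := fun f => ext' fun w => by simp [co_mul]
    mul_assoc := mul_assoc'
    one_mul := one_mul'
    mul_one := mul_one' }

@[simp] theorem co_sub (f g : Ser α) (w) : (f - g).co w = f.co w - g.co w := by
  rfl

end Ser

open Finset PowerSeries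
variable {α : Type*} [DecidableEq α]

/-- Embedding of one-variable power series as series in the letter `x`. -/
noncomputable def emb (x : α) : PowerSeries ℤ →+* Ser α where
  toFun p := ⟨fun w => if w = List.replicate w.length x then PowerSeries.coeff w.length p else 0⟩
  map_one' := Ser.ext' fun w => by
    cases w with
    | nil => simp [Ser.co_one]
    | cons a l => simp [Ser.co_one, PowerSeries.coeff_one]
  map_mul' p q := Ser.ext' fun w => by
    rw [Ser.co_mul]
    show (if w = List.replicate w.length x then PowerSeries.coeff w.length (p * q) else 0) = _
    by_cases hw : w = List.replicate w.length x
    · rw [if_pos hw, PowerSeries.coeff_mul, Finset.Nat.sum_antidiagonal_eq_sum_range_succ_mk]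
      refine Finset.sum_congr rfl fun k hk => ?_
      simp only [Finset.mem_range] at hk
      have hk' : k ≤ w.length := by omega
      have h1 : w.take k = List.replicate k x := by
        conv_lhs => rw [hw]
        rw [List.take_replicate]; congr 1; omega
      have h2 : w.drop k = List.replicate (w.length - k) x := by
        conv_lhs => rw [hw]
        rw [List.drop_replicate]
      show _ = (if w.take k = List.replicate (w.take k).length x
          then PowerSeries.coeff (w.take k).length p else 0) *
        (if w.drop k = List.replicate (w.drop k).length x
          then PowerSeries.coeff (w.drop k).length q else 0)
      rw [if_pos, if_pos]
      · congr 2 <;> simp [h1, h2] <;> omega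
      · rw [h2]; simp
      · rw [h1]; simp [hk']
    · rw [if_neg hw]
      refine (Finset.sum_eq_zero fun k hk => ?_).symm
      show (if w.take k = List.replicate (w.take k).length x
          then PowerSeries.coeff (w.take k).length p else 0) *
        (if w.drop k = List.replicate (w.drop k).length x
          then PowerSeries.coeff (w.drop k).length q else 0) = 0
      by_cases h1 : w.take k = List.replicate (w.take k).length x
      · by_cases h2 : w.drop k = List.replicate (w.drop k).length x
        · exfalso
          apply hw
          have : w = w.take k ++ w.drop k := (List.take_append_drop k w).symm
          rw [this, h1, h2, ← List.replicate_add]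
          congr 1 <;> simp
        · rw [if_neg h2, mul_zero]
      · rw [if_neg h1, zero_mul]
  map_zero' := Ser.ext' fun w => by simp [Ser.co_zero]
  map_add' p q := Ser.ext' fun w => by
    rw [Ser.co_add]
    show (if _ then _ else _) = (if _ then _ else _) + (if _ then _ else _)
    split_ifs <;> simp

theorem co_emb (x : α) (p : PowerSeries ℤ) (w : List α) :
    (emb x p).co w = if w = List.replicate w.length x then PowerSeries.coeff w.length p else 0 := rfl


/-- the inverse of 1+X : alternating series -/
noncomputable def invS : PowerSeries ℤ := PowerSeries.mk fun k => (-1)^k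

theorem one_add_X_mul_invS : (1 + X) * invS = 1 := by
  ext n
  rw [add_mul, one_mul, map_add]
  cases n with
  | zero => simp [invS, coeff_zero_eq_constantCoeff]
  | succ n =>
    rw [PowerSeries.coeff_succ_X_mul]
    simp [invS, coeff_mk, PowerSeries.coeff_one, pow_succ]

noncomputable def U : (PowerSeries ℤ)ˣ :=
  ⟨1 + X, invS, one_add_X_mul_invS, by rw [mul_comm]; exact one_add_X_mul_invS⟩

theorem coeff_U_pow (s : ℕ) : PowerSeries.coeff s ((U ^ s : (PowerSeries ℤ)ˣ) : PowerSeries ℤ) = 1 := by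
  have hU : ((U ^ s : (PowerSeries ℤ)ˣ) : PowerSeries ℤ) = (1 + X)^s := by
    rw [Units.val_pow_eq_pow_val]; rfl
  rw [hU]
  have hP : ((1 : PowerSeries ℤ) + X) = ((Polynomial.X + Polynomial.C (1:ℤ) : Polynomial ℤ) : PowerSeries ℤ) := by
    rw [Polynomial.coe_add, Polynomial.coe_X, Polynomial.coe_C]
    simp [add_comm]
  rw [hP, ← Polynomial.coe_pow, Polynomial.coeff_coe]
  have h : ((Polynomial.X + Polynomial.C (1:ℤ))^s).Monic := (Polynomial.monic_X_add_C 1).pow s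
  have hd : ((Polynomial.X + Polynomial.C (1:ℤ))^s).natDegree = s := by
    rw [Polynomial.natDegree_pow, Polynomial.natDegree_X_add_C, mul_one]
  have := h.coeff_natDegree
  rwa [hd] at this

theorem coeff_mk_one_pow (s : ℕ) (hs : 1 ≤ s) : ∀ k : ℕ,
    1 ≤ PowerSeries.coeff k ((PowerSeries.mk fun _ => (1:ℤ)) ^ s) := by
  induction s with
  | zero => omega
  | succ s ih =>
    intro k
    rcases Nat.eq_or_lt_of_le hs with h1 | h1
    · simp [← h1, coeff_mk]
    · have hs' : 1 ≤ s := by omega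
      rw [pow_succ, PowerSeries.coeff_mul]
      have hmem : (k, 0) ∈ Finset.HasAntidiagonal.antidiagonal k := by simp
      have hterm : ∀ p ∈ Finset.HasAntidiagonal.antidiagonal k,
          0 ≤ PowerSeries.coeff p.1 ((PowerSeries.mk fun _ => (1:ℤ)) ^ s) *
            PowerSeries.coeff p.2 (PowerSeries.mk fun _ => (1:ℤ)) := by
        intro p _
        have h1 := ih hs' p.1
        simp only [coeff_mk]
        nlinarith [h1]
      calc (1:ℤ) ≤ PowerSeries.coeff k ((PowerSeries.mk fun _ => (1:ℤ)) ^ s) *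
            PowerSeries.coeff 0 (PowerSeries.mk fun _ => (1:ℤ)) := by
              simp only [coeff_mk]; linarith [ih hs' k]
        _ ≤ _ := Finset.single_le_sum hterm hmem

theorem coeff_U_zpow_neg (s : ℕ) (hs : 1 ≤ s) :
    PowerSeries.coeff s ((U ^ (-(s:ℤ)) : (PowerSeries ℤ)ˣ) : PowerSeries ℤ) ≠ 0 := by
  have h1 : ((U ^ (-(s:ℤ)) : (PowerSeries ℤ)ˣ) : PowerSeries ℤ) = invS ^ s := by
    rw [zpow_neg, zpow_natCast, ← inv_pow, Units.val_pow_eq_pow_val]; rfl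
  have h2 : invS = PowerSeries.rescale (-1) (PowerSeries.mk fun _ => (1:ℤ)) := by
    rw [PowerSeries.rescale_mk]; simp [invS]
  rw [h1, h2, ← map_pow, PowerSeries.coeff_rescale]
  have := coeff_mk_one_pow s hs s
  intro h
  have h3 : ((-1:ℤ))^s ≠ 0 := by
    apply pow_ne_zero; norm_num
  rcases mul_eq_zero.mp h with h4 | h4
  · exact h3 h4
  · omega

theorem coeff_U_zpow_ne (s : ℕ) (e : ℤ) (he : e = s ∨ e = -(s:ℤ)) :
    PowerSeries.coeff s ((U ^ e : (PowerSeries ℤ)ˣ) : PowerSeries ℤ) ≠ 0 := by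
  rcases he with rfl | rfl
  · rw [zpow_natCast, coeff_U_pow]; norm_num
  · rcases Nat.eq_zero_or_pos s with rfl | hs
    · simp
    · exact coeff_U_zpow_neg s hs


noncomputable def uu (x : α) : (Ser α)ˣ := Units.map (emb x).toMonoidHom U

noncomputable def phi : FreeGroup α →* (Ser α)ˣ := FreeGroup.lift fun x => uu x

theorem phi_of (x : α) : phi (FreeGroup.of x) = uu x := FreeGroup.lift_apply_of

noncomputable def ev : Ser α →+* ℤ where
  toFun f := f.co []
  map_one' := by simp
  map_mul' f g := by show (f * g).co [] = _; rw [Ser.co_mul]; simp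
  map_zero' := rfl
  map_add' f g := rfl

theorem co_phi_nil (g : FreeGroup α) : ((phi g : (Ser α)ˣ) : Ser α).co [] = 1 := by
  have h : (Units.map (ev (α := α)).toMonoidHom).comp phi = 1 := by
    apply FreeGroup.ext_hom
    intro x
    rw [MonoidHom.comp_apply, phi_of]
    ext
    show ev ((uu x : (Ser α)ˣ) : Ser α) = 1
    show ((uu x : (Ser α)ˣ) : Ser α).co [] = 1
    show (emb x ((U : PowerSeries ℤ)) ).co [] = 1
    rw [co_emb]
    simp [U, PowerSeries.coeff_zero_eq_constantCoeff]
  have h2 : (Units.map (ev (α := α)).toMonoidHom) (phi g) = 1 := by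
    have := congrArg (fun f => f g) h
    simpa using this
  have h3 := congrArg (fun u : ℤˣ => (u : ℤ)) h2
  simp at h3; exact h3

noncomputable def Dl (g : FreeGroup α) : Ser α := ((phi g : (Ser α)ˣ) : Ser α) - 1

theorem Dl_nil (g : FreeGroup α) : (Dl g).co [] = 0 := by
  rw [Dl, Ser.co_sub, co_phi_nil, Ser.co_one, if_pos rfl, sub_self]

theorem Dl_mul (a b : FreeGroup α) : Dl (a * b) = Dl a + Dl b + Dl a * Dl b := by
  unfold Dl
  rw [map_mul, Units.val_mul]
  noncomm_ring

theorem Dl_inv (g : FreeGroup α) :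
    Dl g⁻¹ = -(((phi g⁻¹ : (Ser α)ˣ) : Ser α) * Dl g) := by
  unfold Dl
  have h : ((phi g⁻¹ : (Ser α)ˣ) : Ser α) * ((phi g : (Ser α)ˣ) : Ser α) = 1 := by
    rw [← Units.val_mul, ← map_mul, inv_mul_cancel, map_one, Units.val_one]
  rw [mul_sub, h, mul_one, neg_sub]

theorem Dl_conj (g p : FreeGroup α) :
    Dl (g * p * g⁻¹) =
      ((phi g : (Ser α)ˣ) : Ser α) * Dl p * ((phi g⁻¹ : (Ser α)ˣ) : Ser α) := by
  unfold Dl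
  have h : ((phi g : (Ser α)ˣ) : Ser α) * ((phi g⁻¹ : (Ser α)ˣ) : Ser α) = 1 := by
    rw [← Units.val_mul, ← map_mul, mul_inv_cancel, map_one, Units.val_one]
  rw [map_mul, map_mul, Units.val_mul, Units.val_mul]
  have expand : ((phi g : (Ser α)ˣ) : Ser α) * (((phi p : (Ser α)ˣ) : Ser α) - 1) *
      ((phi g⁻¹ : (Ser α)ˣ) : Ser α) =
      ((phi g : (Ser α)ˣ) : Ser α) * ((phi p : (Ser α)ˣ) : Ser α) * ((phi g⁻¹ : (Ser α)ˣ) : Ser α)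
      - ((phi g : (Ser α)ˣ) : Ser α) * ((phi g⁻¹ : (Ser α)ˣ) : Ser α) := by noncomm_ring
  rw [expand, h]

/-! ### words fitting a pattern of letters -/

def Fits : List (α × Bool) → List α → Prop
  | [], w => w = []
  | p :: L, w => ∃ m w', w = List.replicate m p.1 ++ w' ∧ Fits L w'

theorem exists_ne_zero_of_co_mul_ne_zero {f g : Ser α} {w : List α}
    (h : (f * g).co w ≠ 0) : ∃ k, f.co (w.take k) ≠ 0 ∧ g.co (w.drop k) ≠ 0 := by
  rw [Ser.co_mul] at h
  obtain ⟨k, -, hk⟩ := Finset.exists_ne_zero_of_sum_ne_zero h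
  exact ⟨k, fun h1 => hk (by rw [h1, zero_mul]), fun h2 => hk (by rw [h2, mul_zero])⟩

theorem mk_cons (p : α × Bool) (L : List (α × Bool)) :
    FreeGroup.mk (p :: L) = FreeGroup.mk [p] * FreeGroup.mk L := by
  rw [FreeGroup.mul_mk]; rfl

theorem phi_mk_singleton (x : α) (b : Bool) :
    phi (FreeGroup.mk [(x, b)]) =
      Units.map (emb (α := α) x).toMonoidHom (U ^ (if b then (1:ℤ) else -1)) := by
  cases b
  · have h1 : FreeGroup.mk [(x, false)] = (FreeGroup.of x)⁻¹ := by
      apply eq_inv_of_mul_eq_one_left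
      show FreeGroup.mk [(x, false)] * FreeGroup.mk [(x, true)] = 1
      rw [FreeGroup.mul_mk]
      have : FreeGroup.reduce [(x, false), (x, true)] = FreeGroup.reduce [] := by
        simp [FreeGroup.reduce]
      have h2 := FreeGroup.reduce.exact this
      show FreeGroup.mk [(x, false), (x, true)] = 1
      rw [h2]
      exact FreeGroup.one_eq_mk.symm
    rw [h1, map_inv, phi_of]
    have he : (if (false : Bool) = true then (1:ℤ) else -1) = -1 := rfl
    rw [he, zpow_neg, zpow_one]
    exact (map_inv (Units.map (emb (α := α) x).toMonoidHom) U).symm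
  · show phi (FreeGroup.of x) = _
    rw [phi_of]
    have he : (if (true : Bool) = true then (1:ℤ) else -1) = 1 := rfl
    rw [he, zpow_one]
    rfl

theorem phi_mk_replicate (x : α) (b : Bool) (s : ℕ) :
    phi (FreeGroup.mk (List.replicate s (x, b))) =
      Units.map (emb (α := α) x).toMonoidHom (U ^ ((if b then (1:ℤ) else -1) * s)) := by
  induction s with
  | zero => simp [← FreeGroup.one_eq_mk]
  | succ s ih =>
    rw [List.replicate_succ, mk_cons, map_mul, phi_mk_singleton, ih, ← map_mul, ← zpow_add]
    congr 2
    push_cast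
    ring

theorem fits_of_co_ne : ∀ (L : List (α × Bool)) (w : List α),
    ((phi (FreeGroup.mk L) : (Ser α)ˣ) : Ser α).co w ≠ 0 → Fits L w := by
  intro L
  induction L with
  | nil =>
    intro w h
    have h1 : FreeGroup.mk ([] : List (α × Bool)) = 1 := rfl
    rw [h1, map_one, Units.val_one, Ser.co_one] at h
    by_cases hw : w = []
    · exact hw
    · rw [if_neg hw] at h; exact absurd rfl h
  | cons p L ih =>
    intro w h
    rw [mk_cons, map_mul, Units.val_mul] at h
    obtain ⟨k, h1, h2⟩ := exists_ne_zero_of_co_mul_ne_zero h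
    rw [phi_mk_singleton] at h1
    have h1' : (emb p.1 ((U ^ (if p.2 then (1:ℤ) else -1) : (PowerSeries ℤ)ˣ) : PowerSeries ℤ)).co
        (w.take k) ≠ 0 := h1
    rw [co_emb] at h1'
    have hrep : w.take k = List.replicate (w.take k).length p.1 := by
      by_contra hcon
      rw [if_neg hcon] at h1'
      exact h1' rfl
    refine ⟨(w.take k).length, w.drop k, ?_, ih _ h2⟩
    rw [← hrep, List.take_append_drop]

/-! ### counting runs -/

def runs : List α → ℕ
  | [] => 0
  | [_] => 1
  | a :: b :: l => (if a = b then 0 else 1) + runs (b :: l)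

@[simp] theorem runs_nil : runs ([] : List α) = 0 := rfl
@[simp] theorem runs_singleton (a : α) : runs [a] = 1 := rfl
theorem runs_cons_cons (a b : α) (l : List α) :
    runs (a :: b :: l) = (if a = b then 0 else 1) + runs (b :: l) := rfl

theorem runs_cons_le (a : α) (l : List α) : runs l ≤ runs (a :: l) := by
  cases l with
  | nil => simp
  | cons b l => rw [runs_cons_cons]; omega

theorem runs_cons_le' (a : α) (l : List α) : runs (a :: l) ≤ runs l + 1 := by
  cases l with
  | nil => simp
  | cons b l => rw [runs_cons_cons]; split <;> omega

theorem runs_cons_cons_same (x : α) (l : List α) : runs (x :: x :: l) = runs (x :: l) := by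
  rw [runs_cons_cons, if_pos rfl, zero_add]

theorem runs_replicate_append (x : α) (v : List α) :
    ∀ m, 1 ≤ m → runs (List.replicate m x ++ v) = runs (x :: v) := by
  intro m
  induction m with
  | zero => omega
  | succ m ih =>
    intro _
    rcases Nat.eq_zero_or_pos m with rfl | hm
    · simp
    · rw [List.replicate_succ, List.cons_append]
      have h2 : List.replicate m x ++ v = x :: (List.replicate (m-1) x ++ v) := by
        conv_lhs => rw [show m = (m-1) + 1 by omega, List.replicate_succ, List.cons_append]
      rw [h2, runs_cons_cons_same, ← h2, ih hm]

theorem runs_cons_replicate_append (a x : α) (v : List α) (m : ℕ) (hm : 1 ≤ m) :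
    runs (a :: (List.replicate m x ++ v)) = runs (a :: x :: v) := by
  have h2 : List.replicate m x ++ v = x :: (List.replicate (m-1) x ++ v) := by
    conv_lhs => rw [show m = (m-1) + 1 by omega, List.replicate_succ, List.cons_append]
  rcases Nat.eq_or_lt_of_le hm with h1 | h1
  · rw [← h1]; simp
  · rw [h2, runs_cons_cons, runs_cons_cons]
    congr 1
    rw [← h2, runs_replicate_append x v m hm]

theorem runs_le_cons_cons (a x : α) (v : List α) : runs (a :: v) ≤ runs (a :: x :: v) := by
  by_cases hax : a = x
  · subst hax
    rw [runs_cons_cons_same]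
  · rw [runs_cons_cons, if_neg hax]
    have h1 := runs_cons_le x v
    have h2 := runs_cons_le' a v
    omega

theorem fits_runs : ∀ (L : List (α × Bool)) (w : List α), Fits L w →
    runs w ≤ runs (L.map Prod.fst) ∧ ∀ a, runs (a :: w) ≤ runs (a :: L.map Prod.fst) := by
  intro L
  induction L with
  | nil =>
    intro w hw
    cases hw
    exact ⟨le_refl _, fun a => le_refl _⟩
  | cons p L ih =>
    intro w hw
    obtain ⟨m, w', rfl, hfit⟩ := hw
    obtain ⟨ih1, ih2⟩ := ih w' hfit
    set x := p.1 with hx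
    have hmap : (p :: L).map Prod.fst = x :: L.map Prod.fst := rfl
    rw [hmap]
    rcases Nat.eq_zero_or_pos m with rfl | hm
    · simp only [List.replicate_zero, List.nil_append]
      constructor
      · exact ih1.trans (runs_cons_le x _)
      · intro a
        exact (ih2 a).trans (runs_le_cons_cons a x _)
    · constructor
      · rw [runs_replicate_append x w' m hm]
        exact ih2 x
      · intro a
        rw [runs_cons_replicate_append a x w' m hm, runs_cons_cons, runs_cons_cons]
        exact Nat.add_le_add_left (ih2 x) _

theorem not_fits (x : α) (L : List (α × Bool))
    (hhead : ∀ p, L.head? = some p → p.1 ≠ x) (j : ℕ) (hj : 1 ≤ j) :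
    ¬ Fits L (List.replicate j x ++ L.map Prod.fst) := by
  intro h
  have h1 := (fits_runs L _ h).1
  rw [runs_replicate_append x _ j hj] at h1
  have h3 : runs (x :: L.map Prod.fst) = 1 + runs (L.map Prod.fst) := by
    cases L with
    | nil => simp
    | cons p L =>
      have hne : p.1 ≠ x := hhead p rfl
      rw [List.map_cons, runs_cons_cons, if_neg (Ne.symm hne)]
  omega

/-! ### the main nonvanishing theorem -/

def NoCancel (L : List (α × Bool)) : Prop :=
  ∀ (L₂ L₃ : List (α × Bool)) (x : α) (b : Bool), L ≠ L₂ ++ (x, b) :: (x, !b) :: L₃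

theorem noCancel_of_reduce {L : List (α × Bool)} (h : FreeGroup.reduce L = L) : NoCancel L := by
  intro L₂ L₃ x b hL
  exact FreeGroup.reduce.not (L₁ := L) (L₂ := L₂) (L₃ := L₃) (by rw [h]; exact hL)

theorem noCancel_append_right {A B : List (α × Bool)} (h : NoCancel (A ++ B)) : NoCancel B :=
  fun L₂ L₃ x b hB => h (A ++ L₂) L₃ x b (by rw [hB, List.append_assoc])

theorem co_phi_ne : ∀ (N : ℕ) (L : List (α × Bool)), L.length ≤ N → NoCancel L →
    ((phi (FreeGroup.mk L) : (Ser α)ˣ) : Ser α).co (L.map Prod.fst) ≠ 0 := by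
  intro N
  induction N with
  | zero =>
    intro L hL _
    cases L with
    | nil =>
      rw [show FreeGroup.mk ([] : List (α × Bool)) = 1 from FreeGroup.one_eq_mk.symm,
        map_one, Units.val_one]
      simp
    | cons p L => simp at hL
  | succ N ih =>
    intro L hlen hnc
    cases L with
    | nil =>
      rw [show FreeGroup.mk ([] : List (α × Bool)) = 1 from FreeGroup.one_eq_mk.symm,
        map_one, Units.val_one]
      simp
    | cons p L0 =>
      obtain ⟨x, b⟩ := p
      set s := (((x,b) :: L0).takeWhile (fun q => q == (x, b))).length with hs_def
      set L' := ((x,b) :: L0).dropWhile (fun q => q == (x, b)) with hL'_def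
      have htw : ((x,b) :: L0).takeWhile (fun q => q == (x, b)) = List.replicate s (x, b) := by
        apply List.eq_replicate_of_mem
        intro q hq
        have := List.mem_takeWhile_imp hq
        exact eq_of_beq this
      have hsplit : List.replicate s (x, b) ++ L' = (x, b) :: L0 := by
        rw [← htw, hL'_def]
        exact List.takeWhile_append_dropWhile
      have hs1 : 1 ≤ s := by
        rw [hs_def, List.takeWhile_cons_of_pos (by simp)]
        simp
      have hhead : ∀ q, L'.head? = some q → q ≠ (x, b) := by
        intro q hq hqe
        have h1 := List.head?_dropWhile_not (fun q => q == (x, b)) ((x,b) :: L0)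
        rw [← hL'_def, hq] at h1
        simp only [Option.all_some] at h1
        rw [hqe] at h1
        simp at h1
      clear_value s L'
      clear hs_def hL'_def htw
      have hheadx : ∀ q, L'.head? = some q → q.1 ≠ x := by
        intro q hq hq1
        have h2 : q.2 ≠ b := fun hc => hhead q hq (Prod.ext hq1 hc)
        have hqb : q.2 = !b := by
          cases hb : b <;> cases hc : q.2 <;> simp_all
        obtain ⟨L'', hL''⟩ : ∃ L'', L' = q :: L'' := by
          cases L' with
          | nil => simp at hq
          | cons a t =>
            simp only [List.head?_cons, Option.some.injEq] at hq
            exact ⟨t, by rw [hq]⟩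
        have hq' : q = (x, !b) := Prod.ext hq1 hqb
        apply hnc (List.replicate (s - 1) (x, b)) L'' x b
        rw [← hsplit, hL'', hq']
        conv_lhs => rw [show s = (s - 1) + 1 by omega]
        rw [List.replicate_add]
        simp
      have hlen' : L'.length ≤ N := by
        have hh := congrArg List.length hsplit
        rw [List.length_append, List.length_replicate, List.length_cons] at hh
        rw [List.length_cons] at hlen
        omega
      have hnc' : NoCancel L' := noCancel_append_right (A := List.replicate s (x, b))
        (by rw [hsplit]; exact hnc)
      have IH := ih L' hlen' hnc'
      set ℓ' := L'.map Prod.fst with hl'_def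
      have hw : ((x,b) :: L0).map Prod.fst = List.replicate s x ++ ℓ' := by
        rw [← hsplit, List.map_append, List.map_replicate]
      set e : ℤ := (if b then (1:ℤ) else -1) * s with he_def
      have hphi : phi (FreeGroup.mk ((x,b) :: L0)) =
          Units.map (emb (α := α) x).toMonoidHom (U ^ e) * phi (FreeGroup.mk L') := by
        rw [← hsplit, ← FreeGroup.mul_mk, map_mul, phi_mk_replicate]
      rw [hphi, hw, Units.val_mul, Ser.co_mul]
      set w := List.replicate s x ++ ℓ' with hwdef
      have hwlen : w.length = s + ℓ'.length := by simp [hwdef]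
      rw [Finset.sum_eq_single s]
      · -- main term nonzero
        have htake : w.take s = List.replicate s x := by
          rw [hwdef]
          exact List.take_left' (by simp)
        have hdrop : w.drop s = ℓ' := by
          rw [hwdef]
          exact List.drop_left' (by simp)
        rw [htake, hdrop]
        have hco1 : ((Units.map (emb (α := α) x).toMonoidHom (U ^ e) : (Ser α)ˣ) : Ser α).co
            (List.replicate s x) =
            PowerSeries.coeff s ((U ^ e : (PowerSeries ℤ)ˣ) : PowerSeries ℤ) := by
          show (emb x ((U ^ e : (PowerSeries ℤ)ˣ) : PowerSeries ℤ)).co _ = _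
          rw [co_emb]
          simp
        rw [hco1]
        refine mul_ne_zero ?_ IH
        apply coeff_U_zpow_ne
        rw [he_def]
        cases b
        · right; simp
        · left; simp
      · -- other terms vanish
        intro k hk hks
        simp only [Finset.mem_range] at hk
        rcases Nat.lt_or_ge k s with hlt | hge
        · -- k < s : second factor vanishes
          have hdrop : w.drop k = List.replicate (s - k) x ++ ℓ' := by
            rw [hwdef, List.drop_append_of_le_length (by simp; omega), List.drop_replicate]
          rw [hdrop]
          have h2 : ((phi (FreeGroup.mk L') : (Ser α)ˣ) : Ser α).co
              (List.replicate (s - k) x ++ ℓ') = 0 := by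
            by_contra hne
            exact not_fits x L' hheadx (s - k) (by omega) (fits_of_co_ne L' _ hne)
          rw [h2, mul_zero]
        · -- k > s : first factor vanishes
          have hgt : s < k := lt_of_le_of_ne hge (Ne.symm hks)
          have hl'ne : ℓ' ≠ [] := by
            intro hnil
            rw [hwdef] at hk
            simp [hnil] at hk
            omega
          obtain ⟨q, L'', hL''⟩ : ∃ q L'', L' = q :: L'' := by
            cases L' with
            | nil => simp [hl'_def] at hl'ne
            | cons a t => exact ⟨a, t, rfl⟩
          have hmem : q.1 ∈ w.take k := by
            rw [hwdef, List.take_append]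
            apply List.mem_append_right
            have : k - (List.replicate s x).length ≥ 1 := by simp; omega
            rw [hl'_def, hL'']
            rcases Nat.exists_eq_add_of_le this with ⟨m, hm⟩
            rw [show k - (List.replicate s x).length = m + 1 by omega]
            simp
          have h1 : ((Units.map (emb (α := α) x).toMonoidHom (U ^ e) : (Ser α)ˣ) : Ser α).co
              (w.take k) = 0 := by
            show (emb x ((U ^ e : (PowerSeries ℤ)ˣ) : PowerSeries ℤ)).co _ = 0
            rw [co_emb, if_neg]
            intro hrep
            have := List.eq_of_mem_replicate (hrep ▸ hmem)
            exact hheadx q (by rw [hL'']; rfl) this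
          rw [h1, zero_mul]
      · -- s is in range
        intro hs
        exfalso
        apply hs
        simp only [Finset.mem_range]
        omega

theorem Dl_co_toWord_ne {g : FreeGroup α} (hg : g ≠ 1) :
    g.toWord.map Prod.fst ≠ [] ∧ (Dl g).co (g.toWord.map Prod.fst) ≠ 0 := by
  have hnil : g.toWord ≠ [] := fun h => hg (FreeGroup.toWord_eq_nil_iff.mp h)
  have hne : g.toWord.map Prod.fst ≠ [] := by
    simpa using hnil
  refine ⟨hne, ?_⟩
  rw [Dl, Ser.co_sub, Ser.co_one, if_neg hne, sub_zero]
  have h := co_phi_ne g.toWord.length g.toWord le_rfl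
    (noCancel_of_reduce (FreeGroup.reduce_toWord g))
  rwa [FreeGroup.mk_toWord] at h

/-! ### the positive cone -/

section Order
variable [LinearOrder α]

/-- degree-lexicographic strict order on words -/
def dlt (v w : List α) : Prop :=
  v.length < w.length ∨ (v.length = w.length ∧ v < w)

theorem dlt_irrefl (v : List α) : ¬ dlt v v := by
  rintro (h | ⟨-, h⟩)
  · omega
  · exact lt_irrefl _ h

theorem dlt_trans {u v w : List α} (h1 : dlt u v) (h2 : dlt v w) : dlt u w := by
  rcases h1 with h1 | ⟨h1, h1'⟩ <;> rcases h2 with h2 | ⟨h2, h2'⟩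
  · exact Or.inl (by omega)
  · exact Or.inl (by omega)
  · exact Or.inl (by omega)
  · exact Or.inr ⟨by omega, lt_trans h1' h2'⟩

theorem dlt_total {v w : List α} (h : v ≠ w) : dlt v w ∨ dlt w v := by
  rcases Nat.lt_trichotomy v.length w.length with h1 | h1 | h1
  · exact Or.inl (Or.inl h1)
  · rcases lt_trichotomy v w with h2 | h2 | h2
    · exact Or.inl (Or.inr ⟨h1, h2⟩)
    · exact absurd h2 h
    · exact Or.inr (Or.inr ⟨h1.symm, h2⟩)
  · exact Or.inr (Or.inl h1)

theorem dlt_length {v w : List α} (h : dlt v w) : v.length ≤ w.length := by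
  rcases h with h | ⟨h, -⟩ <;> omega

/-- the positive cone: elements whose Magnus expansion has positive leading coefficient -/
def Pos : Set (FreeGroup α) :=
  {g | ∃ w : List α, w ≠ [] ∧ 0 < (Dl g).co w ∧ ∀ v, dlt v w → (Dl g).co v = 0}

theorem low_mul_vanish {f g : Ser α} {df dg : ℕ}
    (hf : ∀ v : List α, v.length < df → f.co v = 0)
    (hg : ∀ v : List α, v.length < dg → g.co v = 0) :
    ∀ v : List α, v.length < df + dg → (f * g).co v = 0 := by
  intro v hv
  rw [Ser.co_mul]
  refine Finset.sum_eq_zero fun k hk => ?_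
  simp only [Finset.mem_range] at hk
  by_cases h1 : (v.take k).length < df
  · rw [hf _ h1, zero_mul]
  · rw [hg, mul_zero]
    have : (v.take k).length = min k v.length := by simp
    have : (v.drop k).length = v.length - k := by simp
    omega

theorem co_phival_mul_low {h : FreeGroup α} {f : Ser α} {d : ℕ}
    (hf : ∀ v : List α, v.length < d → f.co v = 0) :
    ∀ v : List α, v.length ≤ d → (((phi h : (Ser α)ˣ) : Ser α) * f).co v = f.co v := by
  intro v hv
  rw [Ser.co_mul, Finset.sum_eq_single 0]
  · rw [List.take_zero, List.drop_zero, co_phi_nil, one_mul]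
  · intro k hk hk0
    rw [hf, mul_zero]
    have : (v.drop k).length = v.length - k := by simp
    simp only [Finset.mem_range] at hk
    omega
  · intro h; simp at h

theorem co_mul_phival_low {h : FreeGroup α} {f : Ser α} {d : ℕ}
    (hf : ∀ v : List α, v.length < d → f.co v = 0) :
    ∀ v : List α, v.length ≤ d → ((f * ((phi h : (Ser α)ˣ) : Ser α))).co v = f.co v := by
  intro v hv
  rw [Ser.co_mul, Finset.sum_eq_single v.length]
  · rw [List.take_length, List.drop_length, co_phi_nil, mul_one]
  · intro k hk hk0
    rw [hf, zero_mul]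
    have : (v.take k).length = min k v.length := by simp
    simp only [Finset.mem_range] at hk
    omega
  · intro h; simp at h

theorem dl_inv_co {g : FreeGroup α} {d : ℕ}
    (hmin : ∀ v : List α, v.length < d → (Dl g).co v = 0) :
    ∀ v : List α, v.length ≤ d → (Dl g⁻¹).co v = -((Dl g).co v) := by
  intro v hv
  rw [Dl_inv, Ser.co_neg, co_phival_mul_low hmin v hv]

theorem dl_conj_co {g p : FreeGroup α} {d : ℕ}
    (hmin : ∀ v : List α, v.length < d → (Dl p).co v = 0) :
    ∀ v : List α, v.length ≤ d → (Dl (g * p * g⁻¹)).co v = (Dl p).co v := by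
  intro v hv
  rw [Dl_conj]
  have hlow : ∀ v : List α, v.length < d →
      (((phi g : (Ser α)ˣ) : Ser α) * Dl p).co v = 0 := by
    intro v hv'
    rw [co_phival_mul_low hmin v (le_of_lt hv'), hmin v hv']
  rw [co_mul_phival_low hlow v hv, co_phival_mul_low hmin v hv]

theorem pos_mul {a b : FreeGroup α} (ha : a ∈ Pos) (hb : b ∈ Pos) : a * b ∈ Pos := by
  obtain ⟨wa, ha0, ha1, ha2⟩ := ha
  obtain ⟨wb, hb0, hb1, hb2⟩ := hb
  have hwa1 : 1 ≤ wa.length := by cases wa with | nil => exact absurd rfl ha0 | cons _ _ => simp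
  have hwb1 : 1 ≤ wb.length := by cases wb with | nil => exact absurd rfl hb0 | cons _ _ => simp
  have halow : ∀ v : List α, v.length < wa.length → (Dl a).co v = 0 :=
    fun v hv => ha2 v (Or.inl hv)
  have hblow : ∀ v : List α, v.length < wb.length → (Dl b).co v = 0 :=
    fun v hv => hb2 v (Or.inl hv)
  have hprod := low_mul_vanish halow hblow
  have key : ∀ v : List α, v.length ≤ min wa.length wb.length →
      (Dl (a * b)).co v = (Dl a).co v + (Dl b).co v := by
    intro v hv
    rw [Dl_mul, Ser.co_add, Ser.co_add, hprod v (by omega), add_zero]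
  by_cases hab : dlt wa wb
  · refine ⟨wa, ha0, ?_, ?_⟩
    · rw [key wa (by simp [dlt_length hab]), hb2 wa hab, add_zero]
      exact ha1
    · intro v hv
      rw [key v (le_trans (dlt_length hv) (by simp [dlt_length hab])),
        ha2 v hv, hb2 v (dlt_trans hv hab), add_zero]
  · by_cases heq : wa = wb
    · subst heq
      refine ⟨wa, ha0, ?_, ?_⟩
      · rw [key wa (by simp)]
        omega
      · intro v hv
        rw [key v (le_trans (dlt_length hv) (by simp)), ha2 v hv, hb2 v hv, add_zero]
    · have hba : dlt wb wa := (dlt_total heq).resolve_left hab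
      refine ⟨wb, hb0, ?_, ?_⟩
      · rw [key wb (by simp [dlt_length hba]), ha2 wb hba, zero_add]
        exact hb1
      · intro v hv
        rw [key v (le_trans (dlt_length hv) (by simp [dlt_length hba])),
          ha2 v (dlt_trans hv hba), hb2 v hv, add_zero]

theorem pos_conj {p : FreeGroup α} (hp : p ∈ Pos) (g : FreeGroup α) : g * p * g⁻¹ ∈ Pos := by
  obtain ⟨w, h0, h1, h2⟩ := hp
  have hlow : ∀ v : List α, v.length < w.length → (Dl p).co v = 0 :=
    fun v hv => h2 v (Or.inl hv)
  refine ⟨w, h0, ?_, ?_⟩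
  · rw [dl_conj_co hlow w le_rfl]; exact h1
  · intro v hv
    rw [dl_conj_co hlow v (dlt_length hv), h2 v hv]

theorem pos_not_one : (1 : FreeGroup α) ∉ Pos := by
  rintro ⟨w, -, h1, -⟩
  have : Dl (1 : FreeGroup α) = 0 := by
    rw [Dl, map_one, Units.val_one, sub_self]
  rw [this, Ser.co_zero] at h1
  exact lt_irrefl 0 h1

theorem pos_inv_not {g : FreeGroup α} (hg : g ∈ Pos) : g⁻¹ ∉ Pos := by
  obtain ⟨w, h0, h1, h2⟩ := hg
  rintro ⟨w', h0', h1', h2'⟩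
  have hlow : ∀ v : List α, v.length < w.length → (Dl g).co v = 0 :=
    fun v hv => h2 v (Or.inl hv)
  have hinv := dl_inv_co hlow
  by_cases heq : w' = w
  · subst heq
    rw [hinv w' le_rfl] at h1'
    omega
  · rcases dlt_total heq with hc | hc
    · rw [hinv w' (dlt_length hc), h2 w' hc, neg_zero] at h1'
      exact lt_irrefl 0 h1'
    · have := h2' w hc
      rw [hinv w le_rfl] at this
      omega

end Order

section Trich
variable [LinearOrder α] [Fintype α]

/-- all words of a given length -/
def allW : ℕ → Finset (List α)
  | 0 => {[]}
  | d + 1 => Finset.univ.biUnion fun a : α => (allW d).image (a :: ·)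

theorem mem_allW : ∀ (d : ℕ) (v : List α), v ∈ allW d ↔ v.length = d := by
  intro d
  induction d with
  | zero =>
    intro v
    simp [allW, List.length_eq_zero_iff]
  | succ d ih =>
    intro v
    simp only [allW, Finset.mem_biUnion, Finset.mem_univ, Finset.mem_image, true_and]
    constructor
    · rintro ⟨a, u, hu, rfl⟩
      simp [ih u |>.mp hu]
    · intro hv
      cases v with
      | nil => simp at hv
      | cons a u =>
        refine ⟨a, u, (ih u).mpr ?_, rfl⟩
        simpa using hv

theorem pos_total {g : FreeGroup α} (hg : g ≠ 1) : g ∈ Pos ∨ g⁻¹ ∈ Pos := by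
  obtain ⟨hℓne, hℓ⟩ := Dl_co_toWord_ne hg
  have hex : ∃ d, ∃ v : List α, v.length = d ∧ (Dl g).co v ≠ 0 :=
    ⟨_, _, rfl, hℓ⟩
  classical
  obtain ⟨d, hd_spec, hd_min⟩ : ∃ d, (∃ v : List α, v.length = d ∧ (Dl g).co v ≠ 0) ∧
      ∀ d' < d, ¬∃ v : List α, v.length = d' ∧ (Dl g).co v ≠ 0 :=
    ⟨Nat.find hex, Nat.find_spec hex, fun d' hd' => Nat.find_min hex hd'⟩
  obtain ⟨v₀, hv₀d, hv₀⟩ := hd_spec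
  have hF : (Finset.filter (fun v => (Dl g).co v ≠ 0) (allW d)).Nonempty :=
    ⟨v₀, Finset.mem_filter.mpr ⟨(mem_allW d v₀).mpr hv₀d, hv₀⟩⟩
  obtain ⟨w₀, hw₀mem, hw₀le⟩ :
      ∃ w₀ ∈ Finset.filter (fun v => (Dl g).co v ≠ 0) (allW d),
        ∀ v ∈ Finset.filter (fun v => (Dl g).co v ≠ 0) (allW d), w₀ ≤ v :=
    ⟨_, Finset.min'_mem _ hF, fun v => Finset.min'_le _ v⟩
  rw [Finset.mem_filter, mem_allW] at hw₀mem
  obtain ⟨hw₀d, hw₀ne⟩ := hw₀mem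
  have hmin : ∀ v : List α, dlt v w₀ → (Dl g).co v = 0 := by
    intro v hv
    rcases hv with hv | ⟨hv, hv'⟩
    · by_contra hvne
      exact hd_min v.length (by omega) ⟨v, rfl, hvne⟩
    · by_contra hvne
      have hvF : v ∈ Finset.filter (fun v => (Dl g).co v ≠ 0) (allW d) :=
        Finset.mem_filter.mpr ⟨(mem_allW d v).mpr (by omega), hvne⟩
      exact absurd hv' (not_lt.mpr (hw₀le v hvF))
  have hw₀nil : w₀ ≠ [] := by
    intro hnil
    rw [hnil, Dl_nil] at hw₀ne
    exact hw₀ne rfl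
  have hlow : ∀ v : List α, v.length < w₀.length → (Dl g).co v = 0 :=
    fun v hv => hmin v (Or.inl hv)
  rcases lt_trichotomy 0 ((Dl g).co w₀) with hpos | hzero | hneg
  · exact Or.inl ⟨w₀, hw₀nil, hpos, hmin⟩
  · exact absurd hzero.symm hw₀ne
  · refine Or.inr ⟨w₀, hw₀nil, ?_, ?_⟩
    · rw [dl_inv_co hlow w₀ le_rfl]
      omega
    · intro v hv
      rw [dl_inv_co hlow v (dlt_length hv), hmin v hv, neg_zero]

end Trich
end FGO

/-- For every `n ≥ 1`, the free group on `n` generators is bi-orderable: it admits a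
bi-invariant linear order; equivalently, it has a conjugation-invariant positive cone. -/
theorem freeGroup_biOrderable (n : ℕ) (hn : 1 ≤ n) :
    (∃ lo : LinearOrder (FreeGroup (Fin n)),
      (∀ a b c : FreeGroup (Fin n), lo.lt a b → lo.lt (c * a) (c * b)) ∧
      (∀ a b c : FreeGroup (Fin n), lo.lt a b → lo.lt (a * c) (b * c))) ∧
    ∃ P : Set (FreeGroup (Fin n)),
      IsPositiveCone P ∧ ∀ p ∈ P, ∀ g : FreeGroup (Fin n), g * p * g⁻¹ ∈ P := by
  classical
  set P : Set (FreeGroup (Fin n)) := FGO.Pos with hP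
  have hmul : ∀ a ∈ P, ∀ b ∈ P, a * b ∈ P := fun a ha b hb => FGO.pos_mul ha hb
  have htot : ∀ g : FreeGroup (Fin n), g ∈ P ∨ g = 1 ∨ g⁻¹ ∈ P := by
    intro g
    by_cases hg : g = 1
    · exact Or.inr (Or.inl hg)
    · rcases FGO.pos_total hg with h | h
      · exact Or.inl h
      · exact Or.inr (Or.inr h)
  have hone : (1 : FreeGroup (Fin n)) ∉ P := FGO.pos_not_one
  have hdisj : ∀ g ∈ P, g⁻¹ ∉ P := fun g hg => FGO.pos_inv_not hg
  have hconj : ∀ p ∈ P, ∀ g : FreeGroup (Fin n), g * p * g⁻¹ ∈ P :=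
    fun p hp g => FGO.pos_conj hp g
  have hne1 : ∀ {g : FreeGroup (Fin n)}, g ∈ P → g ≠ 1 := by
    intro g hg h
    rw [h] at hg
    exact hone hg
  constructor
  · refine ⟨{ le := fun a b => a = b ∨ a⁻¹ * b ∈ P
              lt := fun a b => a⁻¹ * b ∈ P
              le_refl := fun a => Or.inl rfl
              le_trans := ?_
              le_antisymm := ?_
              le_total := ?_
              lt_iff_le_not_ge := ?_
              toDecidableLE := fun a b => Classical.dec _ }, ?_, ?_⟩
    · rintro a b c (rfl | hab) (rfl | hbc)
      · exact Or.inl rfl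
      · exact Or.inr hbc
      · exact Or.inr hab
      · refine Or.inr ?_
        have := hmul _ hab _ hbc
        have he : a⁻¹ * b * (b⁻¹ * c) = a⁻¹ * c := by
          simp [mul_assoc]
        rwa [he] at this
    · intro a b
      constructor
      · intro h
        refine ⟨Or.inr h, ?_⟩
        rintro (rfl | hba)
        · exact hne1 h (by simp)
        · have : (a⁻¹ * b)⁻¹ ∈ P := by rwa [mul_inv_rev, inv_inv]
          exact hdisj _ h this
      · rintro ⟨rfl | hab, hn2⟩
        · exact absurd (Or.inl rfl) hn2
        · exact hab
    · rintro a b (rfl | hab) (h | hba)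
      · rfl
      · rfl
      · exact h.symm
      · exfalso
        have : (a⁻¹ * b)⁻¹ ∈ P := by
          rwa [mul_inv_rev, inv_inv]
        exact hdisj _ hab this
    · intro a b
      by_cases hab : a = b
      · exact Or.inl (Or.inl hab)
      · have hne : a⁻¹ * b ≠ 1 := fun h => hab (by
          have := congrArg (a * ·) h
          simpa [← mul_assoc, eq_comm] using this)
        rcases htot (a⁻¹ * b) with h | h | h
        · exact Or.inl (Or.inr h)
        · exact absurd h hne
        · refine Or.inr (Or.inr ?_)
          rwa [mul_inv_rev, inv_inv] at h
    · intro a b c h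
      show (c * a)⁻¹ * (c * b) ∈ P
      have he : (c * a)⁻¹ * (c * b) = a⁻¹ * b := by
        rw [mul_inv_rev]
        simp [mul_assoc]
      rwa [he]
    · intro a b c h
      show (a * c)⁻¹ * (b * c) ∈ P
      have he : (a * c)⁻¹ * (b * c) = c⁻¹ * (a⁻¹ * b) * (c⁻¹)⁻¹ := by
        rw [mul_inv_rev, inv_inv]
        simp [mul_assoc]
      rw [he]
      exact hconj _ h c⁻¹
  · exact ⟨P, ⟨hmul, htot, hone, hdisj⟩, hconj⟩
end

section
/- Thompson's group F is bi-orderable. Explicitly, the set P of all f ∈ F with f ≠ id such that the first slope of f different from 1 is greater than 1 — i.e., setting t₀ := sup{s ∈ [0,1] : f(t) = t for all t ∈ [0,s]}, there exists ε > 0 with f(t) > t for all t ∈ (t₀, t₀ + ε) — is a conjugation-invariant positive cone on F, so the relation f < g ⇔ f⁻¹g ∈ P is a linear order on F invariant under left and right multiplication. -/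
/-- A real number is dyadic if it is of the form `a / 2 ^ m` with `a : ℤ`. -/
def IsDyadic (x : ℝ) : Prop := ∃ (a : ℤ) (m : ℕ), x = (a : ℝ) / 2 ^ m

/-- `f` belongs to Thompson's group `F`: we realize an element of `F` as a bijection of
`ℝ` which is the identity outside `[0,1]` and which on `[0,1]` is piecewise linear with
finitely many breakpoints, all breakpoints being dyadic rationals and all slopes being
integer powers of `2`.  (Such an `f` is automatically an orientation-preserving
homeomorphism of `[0,1]` fixing `0` and `1`.) -/
def IsThompsonF (f : Equiv.Perm ℝ) : Prop :=
  (∀ x : ℝ, x ∉ Set.Icc (0 : ℝ) 1 → f x = x) ∧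
  ∃ (m : ℕ) (t : Fin (m + 1) → ℝ),
    StrictMono t ∧ t 0 = 0 ∧ t (Fin.last m) = 1 ∧ (∀ j, IsDyadic (t j)) ∧
    ∀ j : Fin m, ∃ k : ℤ, ∀ x ∈ Set.Icc (t j.castSucc) (t j.succ),
      f x = f (t j.castSucc) + (2 : ℝ) ^ k * (x - t j.castSucc)

/-- `t₀ = sup { s ∈ [0,1] : f(t) = t for all t ∈ [0,s] }`, the point up to which `f`
is the identity. -/
noncomputable def firstNontrivialPoint (f : Equiv.Perm ℝ) : ℝ :=
  sSup {s : ℝ | s ∈ Set.Icc (0 : ℝ) 1 ∧ ∀ t ∈ Set.Icc (0 : ℝ) s, f t = t}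

/-- The set of positive elements of Thompson's group `F`: nontrivial elements whose
first slope different from `1` is greater than `1`, i.e. `f(t) > t` just to the right
of the point `t₀` up to which `f` is the identity. -/
noncomputable def ThompsonFPos : Set (Equiv.Perm ℝ) :=
  {f | IsThompsonF f ∧ f ≠ 1 ∧
    ∃ ε > (0 : ℝ), ∀ t ∈ Set.Ioo (firstNontrivialPoint f) (firstNontrivialPoint f + ε),
      t < f t}

theorem Equiv.Perm.inv_apply_self {α : Type*} (f : Equiv.Perm α) (x : α) : f⁻¹ (f x) = x :=
  f.symm_apply_apply x

theorem Equiv.Perm.apply_inv_self {α : Type*} (f : Equiv.Perm α) (x : α) : f (f⁻¹ x) = x :=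
  f.apply_symm_apply x

lemma isDyadic_zero : IsDyadic 0 := ⟨0, 0, by norm_num⟩

lemma isDyadic_one : IsDyadic 1 := ⟨1, 0, by norm_num⟩

lemma IsDyadic.add {x y : ℝ} (hx : IsDyadic x) (hy : IsDyadic y) : IsDyadic (x + y) := by
  obtain ⟨a, m, rfl⟩ := hx
  obtain ⟨b, n, rfl⟩ := hy
  refine ⟨a * 2 ^ n + b * 2 ^ m, m + n, ?_⟩
  have h2m : ((2:ℝ) ^ m) ≠ 0 := by positivity
  have h2n : ((2:ℝ) ^ n) ≠ 0 := by positivity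
  rw [div_add_div _ _ h2m h2n, pow_add]
  push_cast
  ring_nf

lemma IsDyadic.neg {x : ℝ} (hx : IsDyadic x) : IsDyadic (-x) := by
  obtain ⟨a, m, rfl⟩ := hx
  exact ⟨-a, m, by push_cast; ring⟩

lemma IsDyadic.sub {x y : ℝ} (hx : IsDyadic x) (hy : IsDyadic y) : IsDyadic (x - y) := by
  simpa [sub_eq_add_neg] using hx.add hy.neg

lemma IsDyadic.mul {x y : ℝ} (hx : IsDyadic x) (hy : IsDyadic y) : IsDyadic (x * y) := by
  obtain ⟨a, m, rfl⟩ := hx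
  obtain ⟨b, n, rfl⟩ := hy
  refine ⟨a * b, m + n, ?_⟩
  have h2m : ((2:ℝ) ^ m) ≠ 0 := by positivity
  have h2n : ((2:ℝ) ^ n) ≠ 0 := by positivity
  rw [div_mul_div_comm, pow_add]
  push_cast
  ring_nf

lemma isDyadic_two_zpow (k : ℤ) : IsDyadic ((2:ℝ) ^ k) := by
  obtain ⟨n, rfl | rfl⟩ := k.eq_nat_or_neg
  · exact ⟨2 ^ n, 0, by push_cast [zpow_natCast]; norm_num⟩
  · exact ⟨1, n, by rw [zpow_neg, zpow_natCast]; push_cast; ring⟩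

section Locators

variable {m : ℕ} {t : Fin (m + 1) → ℝ}

lemma loc_left (ht : StrictMono t) {x : ℝ} (h0 : t 0 ≤ x) (h1 : x < t (Fin.last m)) :
    ∃ i : Fin m, t i.castSucc ≤ x ∧ x < t i.succ := by
  classical
  set A : Finset (Fin (m + 1)) := Finset.univ.filter (fun i => t i ≤ x) with hA
  have hA0 : (0 : Fin (m+1)) ∈ A := by simp [hA, h0]
  have hAne : A.Nonempty := ⟨0, hA0⟩
  set M := A.max' hAne with hM
  have hMmem : M ∈ A := A.max'_mem hAne
  have hMle : t M ≤ x := by simpa [hA] using hMmem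
  have hMne : M ≠ Fin.last m := by
    intro h; rw [h] at hMle; exact absurd hMle (not_le.2 h1)
  refine ⟨M.castPred hMne, by rwa [Fin.castSucc_castPred], ?_⟩
  by_contra hcon
  have hmem : (M.castPred hMne).succ ∈ A := by simp [hA, not_lt.1 hcon]
  have := A.le_max' _ hmem
  rw [← hM] at this
  have h2 : (M.castPred hMne).castSucc < (M.castPred hMne).succ := Fin.castSucc_lt_succ
  rw [Fin.castSucc_castPred] at h2
  exact absurd (lt_of_lt_of_le h2 this) (lt_irrefl M)

lemma loc_right (ht : StrictMono t) {y : ℝ} (h0 : t 0 < y) (h1 : y ≤ t (Fin.last m)) :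
    ∃ j : Fin m, t j.castSucc < y ∧ y ≤ t j.succ := by
  classical
  set A : Finset (Fin (m + 1)) := Finset.univ.filter (fun i => y ≤ t i) with hA
  have hA0 : (Fin.last m) ∈ A := by simp [hA, h1]
  have hAne : A.Nonempty := ⟨_, hA0⟩
  set M := A.min' hAne with hM
  have hMmem : M ∈ A := A.min'_mem hAne
  have hMle : y ≤ t M := by simpa [hA] using hMmem
  have hMne : M ≠ 0 := by
    intro h; rw [h] at hMle; exact absurd hMle (not_le.2 h0)
  obtain ⟨j, hj⟩ := Fin.eq_succ_of_ne_zero hMne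
  refine ⟨j, ?_, by rw [← hj]; exact hMle⟩
  by_contra hcon
  have hmem : j.castSucc ∈ A := by simp [hA, not_lt.1 hcon]
  have := A.min'_le _ hmem
  rw [← hM, hj] at this
  exact absurd (lt_of_le_of_lt this (Fin.castSucc_lt_succ)) (lt_irrefl _)

lemma gap_piece (ht : StrictMono t) {a b : ℝ}
    (h0 : t 0 ≤ a) (hab : a < b) (h1 : b ≤ t (Fin.last m))
    (gap : ∀ i, t i ≤ a ∨ b ≤ t i) :
    ∃ i : Fin m, t i.castSucc ≤ a ∧ b ≤ t i.succ := by
  obtain ⟨i, hi1, hi2⟩ := loc_left ht h0 (lt_of_lt_of_le hab h1)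
  exact ⟨i, hi1, (gap i.succ).resolve_left (not_le.2 hi2)⟩

lemma strictMonoOn_glue {F : ℝ → ℝ} (ht : StrictMono t)
    (hp : ∀ j : Fin m, StrictMonoOn F (Set.Icc (t j.castSucc) (t j.succ))) :
    StrictMonoOn F (Set.Icc (t 0) (t (Fin.last m))) := by
  intro x hx y hy hxy
  obtain ⟨i, hi1, hi2⟩ := loc_left ht hx.1 (lt_of_lt_of_le hxy hy.2)
  obtain ⟨j, hj1, hj2⟩ := loc_right ht (lt_of_le_of_lt hx.1 hxy) hy.2
  rcases lt_trichotomy i j with hij | hij | hij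
  · have h1 : F x < F (t i.succ) := by
      rcases eq_or_lt_of_le hi1 with h | h
      · exact (hp i) ⟨hi1, hi2.le⟩ ⟨le_of_lt (ht ((Fin.castSucc_lt_succ (i := i)))), le_refl _⟩ hi2
      · exact (hp i) ⟨hi1, hi2.le⟩ ⟨le_of_lt (ht ((Fin.castSucc_lt_succ (i := i)))), le_refl _⟩ hi2
    have h2 : t i.succ ≤ t j.castSucc := ht.monotone (Fin.succ_le_castSucc_iff.2 hij)
    have h3 : F (t i.succ) ≤ F (t j.castSucc) := by
      rcases eq_or_lt_of_le h2 with h | h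
      · rw [h]
      · -- chain through intermediate pieces: use monotonicity of F ∘ t
        have hFt : StrictMono (fun i : Fin (m+1) => F (t i)) := by
          rw [Fin.strictMono_iff_lt_succ]
          intro i
          exact (hp i) ⟨le_refl _, le_of_lt (ht ((Fin.castSucc_lt_succ (i := i))))⟩
            ⟨le_of_lt (ht ((Fin.castSucc_lt_succ (i := i)))), le_refl _⟩ (ht ((Fin.castSucc_lt_succ (i := i))))
        exact (hFt.monotone (Fin.succ_le_castSucc_iff.2 hij))
    have h4 : F (t j.castSucc) ≤ F y :=
      ((hp j).monotoneOn) ⟨le_refl _, le_of_lt (ht ((Fin.castSucc_lt_succ (i := j))))⟩ ⟨hj1.le, hj2⟩ hj1.le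
    exact lt_of_lt_of_le (lt_of_lt_of_le h1 h3) h4
  · subst hij
    exact (hp i) ⟨hi1, hi2.le⟩ ⟨hj1.le, hj2⟩ hxy
  · exfalso
    have : t j.succ ≤ t i.castSucc := ht.monotone (Fin.succ_le_castSucc_iff.2 hij)
    linarith [hj2, hi1]

end Locators

section Basic

variable {f g : Equiv.Perm ℝ}

lemma piece_strictMonoOn {F : ℝ → ℝ} {c d e : ℝ} {k : ℤ}
    (h : ∀ x ∈ Set.Icc c d, F x = e + 2 ^ k * (x - c)) :
    StrictMonoOn F (Set.Icc c d) := by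
  intro x hx y hy hxy
  rw [h x hx, h y hy]
  have hpos : (0:ℝ) < 2 ^ k := zpow_pos (by norm_num) k
  have := mul_lt_mul_of_pos_left (sub_lt_sub_right hxy c) hpos
  linarith

lemma IsThompsonF.strictMonoOn (hf : IsThompsonF f) :
    StrictMonoOn f (Set.Icc (0:ℝ) 1) := by
  obtain ⟨hout, m, t, ht, h0, h1, hdy, hp⟩ := hf
  rw [← h0, ← h1]
  refine strictMonoOn_glue ht (fun j => ?_)
  obtain ⟨k, hk⟩ := hp j
  exact piece_strictMonoOn hk

lemma IsThompsonF.map_zero (hf : IsThompsonF f) : f 0 = 0 := by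
  have hout := hf.1
  have hge : (0:ℝ) ≤ f 0 := by
    by_contra h
    push_neg at h
    have h1 : f (f 0) = f 0 := hout _ (by simp [Set.mem_Icc]; intro h'; linarith)
    have := f.injective h1
    linarith [this ▸ h]
  set y := f.symm 0 with hy
  have hfy : f y = 0 := f.apply_symm_apply 0
  have hymem : y ∈ Set.Icc (0:ℝ) 1 := by
    by_contra h
    have := hout y h
    rw [this] at hfy
    exact h (by rw [hfy]; norm_num)
  rcases eq_or_lt_of_le hymem.1 with h | h
  · rw [← h] at hfy; exact hfy
  · exfalso
    have := hf.strictMonoOn (Set.mem_Icc.2 ⟨le_refl 0, by norm_num⟩) hymem h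
    rw [hfy] at this
    linarith

lemma IsThompsonF.map_one (hf : IsThompsonF f) : f 1 = 1 := by
  have hout := hf.1
  have hle : f 1 ≤ 1 := by
    by_contra h
    push_neg at h
    have h1 : f (f 1) = f 1 := hout _ (by simp [Set.mem_Icc]; intro h'; linarith)
    have := f.injective h1
    linarith [this ▸ h]
  set y := f.symm 1 with hy
  have hfy : f y = 1 := f.apply_symm_apply 1
  have hymem : y ∈ Set.Icc (0:ℝ) 1 := by
    by_contra h
    have := hout y h
    rw [this] at hfy
    exact h (by rw [hfy]; norm_num)
  rcases eq_or_lt_of_le hymem.2 with h | h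
  · rw [h] at hfy; exact hfy
  · exfalso
    have := hf.strictMonoOn hymem (Set.mem_Icc.2 ⟨by norm_num, le_refl 1⟩) h
    rw [hfy] at this
    linarith

lemma IsThompsonF.fix_out (hf : IsThompsonF f) {x : ℝ} (h : x ≤ 0 ∨ 1 ≤ x) : f x = x := by
  rcases h with h | h
  · rcases eq_or_lt_of_le h with h' | h'
    · subst h'; exact hf.map_zero
    · exact hf.1 x (fun hc => absurd hc.1 (not_le.2 h'))
  · rcases eq_or_lt_of_le h with h' | h'
    · rw [← h']; exact hf.map_one
    · exact hf.1 x (fun hc => absurd hc.2 (not_le.2 h'))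

lemma IsThompsonF.mem_Icc (hf : IsThompsonF f) {x : ℝ} (h : x ∈ Set.Icc (0:ℝ) 1) :
    f x ∈ Set.Icc (0:ℝ) 1 := by
  constructor
  · rw [← hf.map_zero]
    exact hf.strictMonoOn.monotoneOn (Set.mem_Icc.2 ⟨le_refl 0, by norm_num⟩) h h.1
  · rw [← hf.map_one]
    exact hf.strictMonoOn.monotoneOn h (Set.mem_Icc.2 ⟨by norm_num, le_refl 1⟩) h.2

lemma IsThompsonF.strictMono (hf : IsThompsonF f) : StrictMono (f : ℝ → ℝ) := by
  intro x y hxy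
  rcases le_or_gt x 0 with hx | hx
  · rcases le_or_gt y 0 with hy | hy
    · rw [hf.fix_out (Or.inl hx), hf.fix_out (Or.inl hy)]; exact hxy
    · rcases le_or_gt y 1 with hy1 | hy1
      · rw [hf.fix_out (Or.inl hx)]
        have h0y : f 0 < f y := hf.strictMonoOn (Set.mem_Icc.2 ⟨le_refl 0, by norm_num⟩)
          (Set.mem_Icc.2 ⟨hy.le, hy1⟩) hy
        rw [hf.map_zero] at h0y
        linarith
      · rw [hf.fix_out (Or.inl hx), hf.fix_out (Or.inr hy1.le)]; exact hxy
  · rcases le_or_gt x 1 with hx1 | hx1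
    · rcases le_or_gt y 1 with hy1 | hy1
      · exact hf.strictMonoOn (Set.mem_Icc.2 ⟨hx.le, hx1⟩)
          (Set.mem_Icc.2 ⟨by linarith, hy1⟩) hxy
      · rw [hf.fix_out (Or.inr hy1.le)]
        have := (hf.mem_Icc (Set.mem_Icc.2 ⟨hx.le, hx1⟩)).2
        linarith
    · rw [hf.fix_out (Or.inr hx1.le), hf.fix_out (Or.inr (by linarith : (1:ℝ) ≤ y))]
      exact hxy

lemma IsThompsonF.continuous (hf : IsThompsonF f) : Continuous (f : ℝ → ℝ) := by
  have h := (StrictMono.orderIsoOfSurjective (f : ℝ → ℝ) hf.strictMono f.surjective).continuous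
  rwa [StrictMono.coe_orderIsoOfSurjective] at h

end Basic

section Tau

variable {f g : Equiv.Perm ℝ}

def fixSet (f : Equiv.Perm ℝ) : Set ℝ :=
  {s : ℝ | s ∈ Set.Icc (0 : ℝ) 1 ∧ ∀ t ∈ Set.Icc (0 : ℝ) s, f t = t}

lemma firstNontrivialPoint_eq (f : Equiv.Perm ℝ) :
    firstNontrivialPoint f = sSup (fixSet f) := rfl

lemma bddAbove_fixSet (f : Equiv.Perm ℝ) : BddAbove (fixSet f) :=
  ⟨1, fun s hs => hs.1.2⟩

lemma IsThompsonF.zero_mem_fixSet (hf : IsThompsonF f) : (0:ℝ) ∈ fixSet f := by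
  refine ⟨Set.mem_Icc.2 ⟨le_refl 0, by norm_num⟩, fun t ht => ?_⟩
  have : t = 0 := le_antisymm ht.2 ht.1
  rw [this]; exact hf.map_zero

lemma IsThompsonF.tau_mem (hf : IsThompsonF f) :
    firstNontrivialPoint f ∈ Set.Icc (0:ℝ) 1 := by
  constructor
  · exact le_csSup (bddAbove_fixSet f) hf.zero_mem_fixSet
  · exact csSup_le ⟨0, hf.zero_mem_fixSet⟩ (fun s hs => hs.1.2)

lemma IsThompsonF.fix_le_tau (hf : IsThompsonF f) {x : ℝ}
    (h : x ≤ firstNontrivialPoint f) : f x = x := by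
  set τ := firstNontrivialPoint f with hτ
  rcases le_or_gt x 0 with hx | hx
  · exact hf.fix_out (Or.inl hx)
  rcases lt_or_eq_of_le h with h' | h'
  · obtain ⟨s, hs, hxs⟩ := exists_lt_of_lt_csSup ⟨0, hf.zero_mem_fixSet⟩ h'
    exact hs.2 x (Set.mem_Icc.2 ⟨hx.le, hxs.le⟩)
  · rw [h']
    have hτpos : 0 < τ := h' ▸ hx
    have hsub : Set.Ico (0:ℝ) τ ⊆ {y | f y = y} := by
      intro y hy
      obtain ⟨s, hs, hys⟩ := exists_lt_of_lt_csSup ⟨0, hf.zero_mem_fixSet⟩ hy.2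
      exact hs.2 y (Set.mem_Icc.2 ⟨hy.1, hys.le⟩)
    have hclosed : IsClosed {y : ℝ | f y = y} :=
      isClosed_eq hf.continuous continuous_id
    have hmem : τ ∈ closure (Set.Ico (0:ℝ) τ) := by
      rw [closure_Ico (ne_of_lt hτpos)]
      exact Set.mem_Icc.2 ⟨hτpos.le, le_refl τ⟩
    exact hclosed.closure_subset_iff.2 hsub hmem

lemma IsThompsonF.tau_lt_one (hf : IsThompsonF f) (hne : f ≠ 1) :
    firstNontrivialPoint f < 1 := by
  rcases lt_or_eq_of_le hf.tau_mem.2 with h | h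
  · exact h
  · exfalso
    apply hne
    ext x
    simp only [Equiv.Perm.coe_one, id_eq]
    rcases le_or_gt x 1 with hx | hx
    · exact hf.fix_le_tau (by rw [h]; exact hx)
    · exact hf.fix_out (Or.inr hx.le)

lemma IsThompsonF.dyadic_breakpoints {m : ℕ} {t : Fin (m+1) → ℝ}
    (hf : IsThompsonF f) (h0 : t 0 = 0) (hdy : ∀ j, IsDyadic (t j))
    (hp : ∀ j : Fin m, ∃ k : ℤ, ∀ x ∈ Set.Icc (t j.castSucc) (t j.succ),
      f x = f (t j.castSucc) + (2 : ℝ) ^ k * (x - t j.castSucc))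
    (ht : StrictMono t) :
    ∀ j : Fin (m+1), IsDyadic (f (t j)) := by
  intro j
  induction j using Fin.induction with
  | zero => rw [h0, hf.map_zero]; exact isDyadic_zero
  | succ i ih =>
    obtain ⟨k, hk⟩ := hp i
    have := hk (t i.succ) (Set.mem_Icc.2 ⟨(ht ((Fin.castSucc_lt_succ (i := i)))).le, le_refl _⟩)
    rw [this]
    exact ih.add ((isDyadic_two_zpow k).mul ((hdy _).sub (hdy _)))

lemma IsThompsonF.dyadic (hf : IsThompsonF f) {x : ℝ} (hx : IsDyadic x) :
    IsDyadic (f x) := by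
  by_cases hmem : x ∈ Set.Icc (0:ℝ) 1
  swap
  · rw [hf.1 x hmem]; exact hx
  obtain ⟨hout, m, t, ht, h0, h1, hdy, hp⟩ := hf
  have hf' : IsThompsonF f := ⟨hout, m, t, ht, h0, h1, hdy, hp⟩
  rcases eq_or_lt_of_le hmem.2 with hx1 | hx1
  · rw [hx1, hf'.map_one]; exact isDyadic_one
  · obtain ⟨i, hi1, hi2⟩ := loc_left ht (h0 ▸ hmem.1) (h1 ▸ hx1)
    obtain ⟨k, hk⟩ := hp i
    rw [hk x (Set.mem_Icc.2 ⟨hi1, hi2.le⟩)]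
    exact (hf'.dyadic_breakpoints h0 hdy hp ht i.castSucc).add
      ((isDyadic_two_zpow k).mul (hx.sub (hdy _)))

lemma IsThompsonF.local_form (hf : IsThompsonF f) (hne : f ≠ 1) :
    ∃ ε > (0:ℝ), ∃ k : ℤ, k ≠ 0 ∧ firstNontrivialPoint f + ε ≤ 1 ∧
      ∀ x ∈ Set.Icc (firstNontrivialPoint f) (firstNontrivialPoint f + ε),
        f x = firstNontrivialPoint f + (2:ℝ) ^ k * (x - firstNontrivialPoint f) := by
  set τ := firstNontrivialPoint f with hτdef
  have hτmem := hf.tau_mem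
  have hτ1 : τ < 1 := hf.tau_lt_one hne
  obtain ⟨hout, m, t, ht, h0, h1, hdy, hp⟩ := hf
  have hf' : IsThompsonF f := ⟨hout, m, t, ht, h0, h1, hdy, hp⟩
  obtain ⟨i, hi1, hi2⟩ := loc_left ht (h0 ▸ hτmem.1) (h1 ▸ hτ1)
  obtain ⟨k, hk⟩ := hp i
  set ε := t i.succ - τ with hε
  have hεpos : 0 < ε := sub_pos.2 hi2
  have hone : τ + ε ≤ 1 := by
    have : t i.succ ≤ t (Fin.last m) := ht.monotone (Fin.le_last _)
    rw [h1] at this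
    simp [hε]; linarith
  have hτfix : f τ = τ := hf'.fix_le_tau (le_refl _)
  have hτeq : τ = f (t i.castSucc) + (2:ℝ) ^ k * (τ - t i.castSucc) := by
    have := hk τ (Set.mem_Icc.2 ⟨hi1, hi2.le⟩)
    rw [hτfix] at this
    exact this
  have hform : ∀ x ∈ Set.Icc τ (τ + ε), f x = τ + (2:ℝ) ^ k * (x - τ) := by
    intro x hx
    have hx' : x ∈ Set.Icc (t i.castSucc) (t i.succ) := by
      constructor
      · exact le_trans hi1 hx.1
      · have := hx.2; simp [hε] at this ⊢; linarith
    rw [hk x hx']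
    linear_combination -hτeq
  refine ⟨ε, hεpos, k, ?_, hone, hform⟩
  intro hk0
  subst hk0
  have hfixmem : τ + ε ∈ fixSet f := by
    refine ⟨Set.mem_Icc.2 ⟨by linarith [hτmem.1], hone⟩, fun y hy => ?_⟩
    rcases le_or_gt y τ with hyτ | hyτ
    · exact hf'.fix_le_tau hyτ
    · have := hform y (Set.mem_Icc.2 ⟨hyτ.le, hy.2⟩)
      simpa using this
  have : τ + ε ≤ τ := le_csSup (bddAbove_fixSet f) hfixmem
  linarith

end Tau

section Inv

variable {f g : Equiv.Perm ℝ}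

lemma IsThompsonF.inv (hf : IsThompsonF f) : IsThompsonF f⁻¹ := by
  obtain ⟨hout, m, t, ht, h0, h1, hdy, hp⟩ := hf
  have hf' : IsThompsonF f := ⟨hout, m, t, ht, h0, h1, hdy, hp⟩
  constructor
  · intro x hx
    have := hout x hx
    calc f⁻¹ x = f⁻¹ (f x) := by rw [this]
    _ = x := f.inv_apply_self x
  · refine ⟨m, fun j => f (t j), hf'.strictMono.comp ht, ?_, ?_, ?_, ?_⟩
    · show f (t 0) = 0
      rw [h0]; exact hf'.map_zero
    · show f (t (Fin.last m)) = 1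
      rw [h1]; exact hf'.map_one
    · exact fun j => hf'.dyadic (hdy j)
    · intro j
      obtain ⟨k, hk⟩ := hp j
      refine ⟨-k, fun y hy => ?_⟩
      change y ∈ Set.Icc (f (t j.castSucc)) (f (t j.succ)) at hy
      show f⁻¹ y = f⁻¹ (f (t j.castSucc)) + (2:ℝ) ^ (-k) * (y - f (t j.castSucc))
      have hlt : t j.castSucc < t j.succ := ht ((Fin.castSucc_lt_succ (i := j)))
      have h2k : (0:ℝ) < 2 ^ k := zpow_pos (by norm_num) k
      have h2nk : (0:ℝ) < 2 ^ (-k) := zpow_pos (by norm_num) (-k)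
      have hcancel : (2:ℝ) ^ (-k) * 2 ^ k = 1 := by
        rw [← zpow_add₀ (two_ne_zero)]; norm_num
      set x := t j.castSucc + 2 ^ (-k) * (y - f (t j.castSucc)) with hx
      have hsucc : f (t j.succ) = f (t j.castSucc) + 2 ^ k * (t j.succ - t j.castSucc) :=
        hk _ (Set.mem_Icc.2 ⟨hlt.le, le_refl _⟩)
      have hxmem : x ∈ Set.Icc (t j.castSucc) (t j.succ) := by
        constructor
        · have : 0 ≤ 2 ^ (-k) * (y - f (t j.castSucc)) :=
            mul_nonneg h2nk.le (by linarith [hy.1])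
          rw [hx]; linarith
        · have hy2 : y - f (t j.castSucc) ≤ 2 ^ k * (t j.succ - t j.castSucc) := by
            linarith [hy.2, hsucc]
          have hmul := mul_le_mul_of_nonneg_left hy2 h2nk.le
          rw [← mul_assoc, hcancel, one_mul] at hmul
          rw [hx]; linarith
      have hfx : f x = y := by
        rw [hk x hxmem, hx]
        linear_combination (y - f (t j.castSucc)) * hcancel
      calc f⁻¹ y = f⁻¹ (f x) := by rw [hfx]
      _ = x := f.inv_apply_self x
      _ = f⁻¹ (f (t j.castSucc)) + 2 ^ (-k) * (y - f (t j.castSucc)) := by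
        rw [f.inv_apply_self]

lemma tau_inv (f : Equiv.Perm ℝ) :
    firstNontrivialPoint f⁻¹ = firstNontrivialPoint f := by
  unfold firstNontrivialPoint
  congr 1
  ext s
  simp only [Set.mem_setOf_eq, and_congr_right_iff]
  intro _
  constructor
  · intro h t ht
    have := h t ht
    conv_lhs => rw [← this]
    exact f.apply_inv_self t
  · intro h t ht
    have := h t ht
    conv_lhs => rw [← this]
    exact f.inv_apply_self t

end Inv

section Mul

variable {f g : Equiv.Perm ℝ}

lemma IsThompsonF.mul (hf : IsThompsonF f) (hg : IsThompsonF g) : IsThompsonF (f * g) := by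
  classical
  obtain ⟨gout, p, s, hs, hs0, hs1, hsdy, hsp⟩ := hg
  obtain ⟨fout, q, t, htt, ht0, ht1, htdy, htp⟩ := hf
  have hf' : IsThompsonF f := ⟨fout, q, t, htt, ht0, ht1, htdy, htp⟩
  have hg' : IsThompsonF g := ⟨gout, p, s, hs, hs0, hs1, hsdy, hsp⟩
  set D : Finset ℝ :=
    (Finset.image s Finset.univ) ∪ (Finset.image (fun b => g⁻¹ (t b)) Finset.univ) with hD
  have hcard : D.card = (D.card - 1) + 1 := by
    have : s 0 ∈ D := by simp [hD]
    have hpos : 0 < D.card := Finset.card_pos.2 ⟨_, this⟩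
    omega
  set m := D.card - 1 with hm
  set v : Fin (m + 1) → ℝ := fun i => D.orderEmbOfFin hcard i with hv
  have hvmono : StrictMono v := (D.orderEmbOfFin hcard).strictMono
  have hvmem : ∀ i, v i ∈ D := fun i => D.orderEmbOfFin_mem hcard i
  have hvrange : ∀ d ∈ D, ∃ i, v i = d := by
    intro d hd
    have : d ∈ Set.range (D.orderEmbOfFin hcard) := by
      rw [Finset.range_orderEmbOfFin]; exact hd
    exact this
  have hDIcc : ∀ d ∈ D, d ∈ Set.Icc (0:ℝ) 1 := by
    intro d hd
    rw [hD] at hd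
    rcases Finset.mem_union.1 hd with h | h
    · obtain ⟨i, _, rfl⟩ := Finset.mem_image.1 h
      constructor
      · rw [← hs0]; exact hs.monotone (Fin.zero_le _)
      · rw [← hs1]; exact hs.monotone (Fin.le_last _)
    · obtain ⟨b, _, rfl⟩ := Finset.mem_image.1 h
      have htb : t b ∈ Set.Icc (0:ℝ) 1 := by
        constructor
        · rw [← ht0]; exact htt.monotone (Fin.zero_le _)
        · rw [← ht1]; exact htt.monotone (Fin.le_last _)
      exact hg'.inv.mem_Icc htb
  have hsD : ∀ i, s i ∈ D := by intro i; simp [hD]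
  have htD : ∀ b, g⁻¹ (t b) ∈ D := by
    intro b; rw [hD]; apply Finset.mem_union_right; exact Finset.mem_image.2 ⟨b, Finset.mem_univ b, rfl⟩
  refine ⟨?_, m, v, hvmono, ?_, ?_, ?_, ?_⟩
  · intro x hx
    show f (g x) = x
    rw [gout x hx, fout x hx]
  · -- v 0 = 0
    obtain ⟨i, hi⟩ := hvrange 0 (by rw [← hs0]; exact hsD 0)
    have h1 : v 0 ≤ 0 := hi ▸ hvmono.monotone (Fin.zero_le i)
    have h2 : (0:ℝ) ≤ v 0 := (hDIcc _ (hvmem 0)).1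
    exact le_antisymm h1 h2
  · -- v last = 1
    obtain ⟨i, hi⟩ := hvrange 1 (by rw [← hs1]; exact hsD _)
    have h1 : (1:ℝ) ≤ v (Fin.last m) := hi ▸ hvmono.monotone (Fin.le_last i)
    have h2 : v (Fin.last m) ≤ 1 := (hDIcc _ (hvmem _)).2
    exact le_antisymm h2 h1
  · -- dyadic
    intro i
    have hd := hvmem i
    rw [hD] at hd
    rcases Finset.mem_union.1 hd with h | h
    · obtain ⟨io, _, heq⟩ := Finset.mem_image.1 h
      rw [← heq]; exact hsdy io
    · obtain ⟨b, _, heq⟩ := Finset.mem_image.1 h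
      rw [← heq]; exact hg'.inv.dyadic (htdy b)
  · -- pieces
    intro i
    set a := v i.castSucc with ha
    set b := v i.succ with hb
    have hab : a < b := hvmono ((Fin.castSucc_lt_succ (i := i)))
    have haI := hDIcc _ (hvmem i.castSucc)
    have hbI := hDIcc _ (hvmem i.succ)
    have hgap : ∀ d ∈ D, d ≤ a ∨ b ≤ d := by
      intro d hd
      obtain ⟨jj, rfl⟩ := hvrange d hd
      rcases le_or_gt jj i.castSucc with h | h
      · exact Or.inl (hvmono.monotone h)
      · exact Or.inr (hvmono.monotone (Fin.castSucc_lt_iff_succ_le.1 h))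
    -- find the g-piece containing [a, b]
    have hga : ∀ io : Fin (p+1), s io ≤ a ∨ b ≤ s io := fun io => hgap _ (hsD io)
    obtain ⟨ig, hig1, hig2⟩ := gap_piece hs (hs0 ▸ haI.1) hab (hs1 ▸ hbI.2) hga
    obtain ⟨kg, hkg⟩ := hsp ig
    have hgform : ∀ x ∈ Set.Icc a b, g x = g a + (2:ℝ) ^ kg * (x - a) := by
      intro x hx
      have hxI : x ∈ Set.Icc (s ig.castSucc) (s ig.succ) :=
        ⟨le_trans hig1 hx.1, le_trans hx.2 hig2⟩
      have haI' : a ∈ Set.Icc (s ig.castSucc) (s ig.succ) := ⟨hig1, le_trans hab.le hig2⟩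
      rw [hkg x hxI, hkg a haI']
      ring
    -- find the f-piece containing [g a, g b]
    set a' := g a with ha'
    set b' := g b with hb'
    have hab' : a' < b' := hg'.strictMono hab
    have haI' := hg'.mem_Icc haI
    have hbI' := hg'.mem_Icc hbI
    have hgt : ∀ jo : Fin (q+1), t jo ≤ a' ∨ b' ≤ t jo := by
      intro jo
      rcases hgap _ (htD jo) with h | h
      · left
        have := hg'.strictMono.monotone h
        rwa [g.apply_inv_self] at this
      · right
        have := hg'.strictMono.monotone h
        rwa [g.apply_inv_self] at this
    obtain ⟨jf, hjf1, hjf2⟩ := gap_piece htt (ht0 ▸ haI'.1) hab' (ht1 ▸ hbI'.2) hgt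
    obtain ⟨kf, hkf⟩ := htp jf
    have hfform : ∀ y ∈ Set.Icc a' b', f y = f a' + (2:ℝ) ^ kf * (y - a') := by
      intro y hy
      have hyI : y ∈ Set.Icc (t jf.castSucc) (t jf.succ) :=
        ⟨le_trans hjf1 hy.1, le_trans hy.2 hjf2⟩
      have haI'' : a' ∈ Set.Icc (t jf.castSucc) (t jf.succ) := ⟨hjf1, le_trans hab'.le hjf2⟩
      rw [hkf y hyI, hkf a' haI'']
      ring
    refine ⟨kf + kg, fun x hx => ?_⟩
    show f (g x) = f (g a) + (2:ℝ) ^ (kf + kg) * (x - a)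
    have hgx : g x ∈ Set.Icc a' b' :=
      ⟨hg'.strictMono.monotone hx.1, hg'.strictMono.monotone hx.2⟩
    rw [hfform _ hgx, hgform x hx, zpow_add₀ (two_ne_zero : (2:ℝ) ≠ 0)]
    ring

end Mul

section Main

variable {f g : Equiv.Perm ℝ}

/-- Thompson's group `F` is bi-orderable: the set of elements whose first slope
different from `1` is greater than `1` is a conjugation-invariant positive cone on `F`. -/
theorem thompsonF_biOrderable :
    (∀ f ∈ ThompsonFPos, ∀ g ∈ ThompsonFPos, f * g ∈ ThompsonFPos) ∧
    (∀ f : Equiv.Perm ℝ, IsThompsonF f → f ∈ ThompsonFPos ∨ f = 1 ∨ f⁻¹ ∈ ThompsonFPos) ∧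
    (1 : Equiv.Perm ℝ) ∉ ThompsonFPos ∧
    (∀ f ∈ ThompsonFPos, f⁻¹ ∉ ThompsonFPos) ∧
    (∀ f ∈ ThompsonFPos, ∀ g : Equiv.Perm ℝ, IsThompsonF g → g * f * g⁻¹ ∈ ThompsonFPos) := by
  refine ⟨?_, ?_, ?_, ?_, ?_⟩
  · -- product closure
    intro f hfP g hgP
    obtain ⟨hf, hfne, εf, hεf, hfpos⟩ := hfP
    obtain ⟨hg, hgne, εg, hεg, hgpos⟩ := hgP
    set τf := firstNontrivialPoint f with hτf
    set τg := firstNontrivialPoint g with hτg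
    set τ := min τf τg with hττ
    have hmul := hf.mul hg
    have hfix : ∀ x ≤ τ, (f * g) x = x := by
      intro x hx
      rw [Equiv.Perm.mul_apply, hg.fix_le_tau (hx.trans (min_le_right _ _)),
          hf.fix_le_tau (hx.trans (min_le_left _ _))]
    have hsign : ∃ δ > (0:ℝ), ∀ x ∈ Set.Ioo τ (τ + δ), x < (f * g) x := by
      rcases lt_trichotomy τg τf with hlt | heqc | hlt
      · have hτeq : τ = τg := min_eq_right hlt.le
        refine ⟨min εg (τf - τg), lt_min hεg (sub_pos.2 hlt), fun x hx => ?_⟩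
        rw [hτeq] at hx
        have hgx : x < g x := hgpos x ⟨hx.1, lt_of_lt_of_le hx.2
          (by linarith [min_le_left εg (τf - τg)])⟩
        rw [Equiv.Perm.mul_apply]
        rcases le_or_gt (g x) τf with h | h
        · rw [hf.fix_le_tau h]; exact hgx
        · have h1 : f τf < f (g x) := hf.strictMono h
          rw [hf.fix_le_tau (le_refl τf)] at h1
          have h2 : x < τf := lt_of_lt_of_le hx.2 (by linarith [min_le_right εg (τf - τg)])
          linarith
      · have hτeq : τ = τf := by rw [hττ, heqc, min_self]
        refine ⟨min εf εg, lt_min hεf hεg, fun x hx => ?_⟩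
        rw [hτeq] at hx
        have hgx : x < g x := hgpos x (by
          rw [← heqc] at hx
          exact ⟨hx.1, lt_of_lt_of_le hx.2 (by linarith [min_le_right εf εg])⟩)
        have hfx : x < f x := hfpos x
          ⟨hx.1, lt_of_lt_of_le hx.2 (by linarith [min_le_left εf εg])⟩
        rw [Equiv.Perm.mul_apply]
        exact lt_trans hfx (hf.strictMono hgx)
      · have hτeq : τ = τf := min_eq_left hlt.le
        refine ⟨min εf (τg - τf), lt_min hεf (sub_pos.2 hlt), fun x hx => ?_⟩
        rw [hτeq] at hx
        have hxg : x ≤ τg := by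
          have := hx.2
          have := min_le_right εf (τg - τf)
          linarith
        rw [Equiv.Perm.mul_apply, hg.fix_le_tau hxg]
        exact hfpos x ⟨hx.1, lt_of_lt_of_le hx.2 (by linarith [min_le_left εf (τg - τf)])⟩
    obtain ⟨δ, hδ, hδpos⟩ := hsign
    have hτIcc : τ ∈ Set.Icc (0:ℝ) 1 :=
      ⟨le_min hf.tau_mem.1 hg.tau_mem.1, (min_le_left _ _).trans hf.tau_mem.2⟩
    have hfgne : f * g ≠ 1 := by
      intro h
      have hx := hδpos (τ + δ / 2) ⟨by linarith, by linarith⟩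
      rw [h] at hx
      simp at hx
    have hτfg : firstNontrivialPoint (f * g) = τ := by
      apply le_antisymm
      · by_contra hcon
        push_neg at hcon
        obtain ⟨x, hx1, hx2⟩ := exists_between (lt_min hcon (by linarith : τ < τ + δ))
        have h1 := hδpos x ⟨hx1, hx2.trans_le (min_le_right _ _)⟩
        have h2 := hmul.fix_le_tau (hx2.trans_le (min_le_left _ _)).le
        linarith [h2 ▸ h1]
      · exact le_csSup (bddAbove_fixSet _) ⟨hτIcc, fun y hy => hfix y hy.2⟩
    exact ⟨hmul, hfgne, δ, hδ, by rw [hτfg]; exact hδpos⟩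
  · -- trichotomy
    intro f hf
    by_cases hne : f = 1
    · exact Or.inr (Or.inl hne)
    obtain ⟨ε, hε, k, hk0, hone, hform⟩ := hf.local_form hne
    set τ := firstNontrivialPoint f with hτ
    rcases lt_or_gt_of_ne hk0 with hk | hk
    · -- k < 0 : f⁻¹ positive
      right; right
      have h2k : (0:ℝ) < 2 ^ k := zpow_pos (by norm_num) k
      have h2nk : (1:ℝ) < 2 ^ (-k) := one_lt_zpow₀ (by norm_num) (by omega)
      have hcancel : (2:ℝ) ^ (-k) * 2 ^ k = 1 := by
        rw [← zpow_add₀ (two_ne_zero)]; norm_num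
      refine ⟨hf.inv, by rwa [ne_eq, inv_eq_one], 2 ^ k * ε, by positivity, fun u hu => ?_⟩
      rw [tau_inv] at hu
      set x := τ + 2 ^ (-k) * (u - τ) with hx
      have hu1 : τ < u := hu.1
      have hu2 : u < τ + 2 ^ k * ε := hu.2
      have hxm : x ∈ Set.Icc τ (τ + ε) := by
        constructor
        · rw [hx]; nlinarith
        · rw [hx]
          have : 2 ^ (-k) * (u - τ) < 2 ^ (-k) * (2 ^ k * ε) := by
            apply mul_lt_mul_of_pos_left _ (by positivity)
            linarith
          rw [← mul_assoc, hcancel, one_mul] at this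
          linarith
      have hfx : f x = u := by
        rw [hform x hxm, hx]
        linear_combination (u - τ) * hcancel
      have : f⁻¹ u = x := by
        rw [← hfx, f.inv_apply_self]
      rw [this, hx]
      nlinarith
    · -- k > 0 : f positive
      left
      have h2k : (1:ℝ) < 2 ^ k := one_lt_zpow₀ (by norm_num) hk
      refine ⟨hf, hne, ε, hε, fun x hx => ?_⟩
      rw [hform x ⟨hx.1.le, hx.2.le⟩]
      have := hx.1
      nlinarith
  · -- 1 ∉ P
    rintro ⟨_, hne, _⟩
    exact hne rfl
  · -- P ∩ P⁻¹ = ∅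
    rintro f ⟨hf, hne, ε₁, hε₁, h1⟩ ⟨hfi, hnei, ε₂, hε₂, h2⟩
    rw [tau_inv] at h2
    set τ := firstNontrivialPoint f with hτ
    set x := τ + min ε₁ ε₂ / 2 with hx
    have hmin : (0:ℝ) < min ε₁ ε₂ := lt_min hε₁ hε₂
    have hx1 : x ∈ Set.Ioo τ (τ + ε₁) :=
      ⟨by rw [hx]; linarith, by rw [hx]; linarith [min_le_left ε₁ ε₂]⟩
    have hx2 : x ∈ Set.Ioo τ (τ + ε₂) :=
      ⟨by rw [hx]; linarith, by rw [hx]; linarith [min_le_right ε₁ ε₂]⟩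
    have ha := h1 x hx1
    have hb := h2 x hx2
    have := hf.strictMono hb
    rw [f.apply_inv_self] at this
    linarith
  · -- conjugation invariance
    intro f hfP g hg
    obtain ⟨hf, hfne, ε, hε, hfpos⟩ := hfP
    set τ := firstNontrivialPoint f with hτ
    have hmul : IsThompsonF (g * f * g⁻¹) := (hg.mul hf).mul hg.inv
    have hcne : g * f * g⁻¹ ≠ 1 := by
      intro h
      rw [mul_inv_eq_one] at h
      exact hfne (mul_eq_left.1 h)
    have htau : firstNontrivialPoint (g * f * g⁻¹) = g τ := by
      apply le_antisymm
      · refine csSup_le ⟨0, hmul.zero_mem_fixSet⟩ (fun x hx => ?_)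
        have h1 : g⁻¹ x ∈ fixSet f := by
          refine ⟨hg.inv.mem_Icc hx.1, fun y hy => ?_⟩
          have hgy : g y ∈ Set.Icc (0:ℝ) x := by
            constructor
            · rw [← hg.map_zero]; exact hg.strictMono.monotone hy.1
            · have := hg.strictMono.monotone hy.2
              rwa [g.apply_inv_self] at this
          have hfix := hx.2 (g y) hgy
          simp only [Equiv.Perm.mul_apply] at hfix
          rw [g.inv_apply_self] at hfix
          exact g.injective hfix
        have h2 : g⁻¹ x ≤ τ := le_csSup (bddAbove_fixSet f) h1
        have := hg.strictMono.monotone h2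
        rwa [g.apply_inv_self] at this
      · refine le_csSup (bddAbove_fixSet _) ⟨hg.mem_Icc hf.tau_mem, fun y hy => ?_⟩
        have hy' : g⁻¹ y ≤ τ := by
          have := hg.inv.strictMono.monotone hy.2
          rwa [g.inv_apply_self] at this
        simp only [Equiv.Perm.mul_apply]
        rw [hf.fix_le_tau hy', g.apply_inv_self]
    set ε' := g (τ + ε) - g τ with hε'
    have hε'pos : 0 < ε' := sub_pos.2 (hg.strictMono (by linarith))
    refine ⟨hmul, hcne, ε', hε'pos, fun u hu => ?_⟩
    rw [htau] at hu
    have hu2 : u < g (τ + ε) := by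
      have := hu.2
      rw [hε'] at this
      linarith
    set x := g⁻¹ u with hxdef
    have hgx : g x = u := g.apply_inv_self u
    have hx1 : τ < x := by
      have : g τ < g x := by rw [hgx]; exact hu.1
      exact hg.strictMono.lt_iff_lt.1 this
    have hx2 : x < τ + ε := by
      have : g x < g (τ + ε) := by rw [hgx]; exact hu2
      exact hg.strictMono.lt_iff_lt.1 this
    have hfx : x < f x := hfpos x ⟨hx1, hx2⟩
    have : g x < g (f x) := hg.strictMono hfx
    rw [hgx] at this
    simp only [Equiv.Perm.mul_apply]
    exact this
end Main
end

section
/- Let F be a free group freely generated by a family of generators {x_j}_{j ∈ J}. For every d ≥ 1, the subgroup γ_d(F) of the lower central series is generated by γ_{d+1}(F) together with all simple commutators [x_{j₁}, x_{j₂}, …, x_{j_d}] of weight d in the free generators. In particular, every element of γ_d(F) is congruent modulo γ_{d+1}(F) to a product of simple commutators of weight d in the generators and their inverses. -/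
/-- The commutator `[a,b] = a⁻¹ b⁻¹ a b`. -/
def grpComm {G : Type*} [Group G] (a b : G) : G := a⁻¹ * b⁻¹ * a * b

/-- `simpleComm a [b₁, …, bₘ] = [a, b₁, …, bₘ]`, the left-normed simple commutator. -/
def simpleComm {G : Type*} [Group G] : G → List G → G
  | a, [] => a
  | a, b :: l => simpleComm (grpComm a b) l

/-- The simple commutator `[a₁, …, a_d]` of a nonempty list. -/
def simpleCommList {G : Type*} [Group G] : List G → G
  | [] => 1
  | a :: l => simpleComm a l

open scoped commutatorElement

section Helpers

variable {G : Type*} [Group G]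

lemma grpComm_eq_commutator (a b : G) : grpComm a b = ⁅a⁻¹, b⁻¹⁆ := by
  simp [grpComm, commutatorElement_def]

lemma grpComm_mem_lcs {m : ℕ} {a : G} (ha : a ∈ (⊤ : Subgroup G).lowerCentralSeries m) (x : G) :
    grpComm a x ∈ (⊤ : Subgroup G).lowerCentralSeries (m + 1) := by
  rw [grpComm_eq_commutator]
  show _ ∈ ⁅(⊤ : Subgroup G).lowerCentralSeries m, (⊤ : Subgroup G)⁆
  exact Subgroup.commutator_mem_commutator (inv_mem ha) (Subgroup.mem_top _)

lemma simpleComm_append (l : List G) : ∀ a b : G,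
    simpleComm a (l ++ [b]) = grpComm (simpleComm a l) b := by
  induction l with
  | nil => intro a b; rfl
  | cons c l ih => intro a b; simpa [simpleComm] using ih (grpComm a c) b

lemma simpleComm_mem (l : List G) : ∀ (n : ℕ) (a : G),
    a ∈ (⊤ : Subgroup G).lowerCentralSeries n → simpleComm a l ∈ (⊤ : Subgroup G).lowerCentralSeries (n + l.length) := by
  induction l with
  | nil => intro n a h; simpa [simpleComm] using h
  | cons b l ih =>
    intro n a h
    have h1 : grpComm a b ∈ (⊤ : Subgroup G).lowerCentralSeries (n + 1) := grpComm_mem_lcs h b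
    have h2 := ih (n + 1) _ h1
    show simpleComm (grpComm a b) l ∈ _
    have : n + (b :: l).length = n + 1 + l.length := by simp; omega
    rw [this]
    exact h2

lemma simpleCommList_mem (l : List G) (n : ℕ) (h : l.length = n + 1) :
    simpleCommList l ∈ (⊤ : Subgroup G).lowerCentralSeries n := by
  cases l with
  | nil => simp at h
  | cons a l =>
    have h2 := simpleComm_mem l 0 a (Subgroup.mem_top a)
    simp only [List.length_cons] at h
    have hn : l.length = n := by omega
    show simpleComm a l ∈ _
    simpa [hn] using h2

lemma simpleCommList_append (l : List G) (hl : l ≠ []) (b : G) :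
    simpleCommList (l ++ [b]) = grpComm (simpleCommList l) b := by
  cases l with
  | nil => exact absurd rfl hl
  | cons a l => exact simpleComm_append l a b

lemma simpleCommList_ofFn_snoc {m : ℕ} (f : Fin (m + 1) → G) (b : G) :
    simpleCommList (List.ofFn (fun t : Fin (m + 2) => Fin.snoc f b t)) =
      grpComm (simpleCommList (List.ofFn f)) b := by
  rw [List.ofFn_succ']
  simp only [Function.comp, Fin.snoc_castSucc, Fin.snoc_last, List.concat_eq_append]
  exact simpleCommList_append _ (by simp [List.ofFn_eq_nil_iff]) b

-- pure commutator identities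
lemma comm_mul_left (a b x : G) : ⁅a * b, x⁆ = a * ⁅b, x⁆ * a⁻¹ * ⁅a, x⁆ := by
  simp only [commutatorElement_def]; group

lemma comm_inv_left (a x : G) : ⁅a⁻¹, x⁆ = a⁻¹ * ⁅a, x⁆⁻¹ * a := by
  simp only [commutatorElement_def]; group

lemma comm_mul_right (a x y : G) : ⁅a, x * y⁆ = ⁅a, x⁆ * (x * ⁅a, y⁆ * x⁻¹) := by
  simp only [commutatorElement_def]; group

lemma comm_inv_right (a x : G) : ⁅a, x⁻¹⁆ = x⁻¹ * ⁅a, x⁆⁻¹ * x := by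
  simp only [commutatorElement_def]; group

lemma conj_central {g z : G} (hz : z ∈ Subgroup.center G) : g * z * g⁻¹ = z := by
  rw [Subgroup.mem_center_iff.1 hz g]
  group

lemma conj_central' {g z : G} (hz : z ∈ Subgroup.center G) : g⁻¹ * z * g = z := by
  rw [Subgroup.mem_center_iff.1 hz g⁻¹]
  group

end Helpers

lemma lcs_free_eq (J : Type*) (n : ℕ) :
    (⊤ : Subgroup (FreeGroup J)).lowerCentralSeries n =
      Subgroup.closure
        (((⊤ : Subgroup (FreeGroup J)).lowerCentralSeries (n + 1) : Set (FreeGroup J)) ∪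
          {w : FreeGroup J | ∃ js : Fin (n + 1) → J,
            w = simpleCommList (List.ofFn fun t => FreeGroup.of (js t))}) := by
  induction n with
  | zero =>
    apply le_antisymm
    · rw [Subgroup.lowerCentralSeries_zero, ← FreeGroup.closure_range_of J]
      apply (Subgroup.closure_le _).2
      rintro w ⟨j, rfl⟩
      apply Subgroup.subset_closure
      right
      refine ⟨fun _ => j, ?_⟩
      simp [List.ofFn_succ, simpleCommList, simpleComm]
    · exact le_top.trans_eq (Subgroup.lowerCentralSeries_zero (S := ⊤)).symm
  | succ n ih =>
    set F := FreeGroup J with hF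
    set Nn := (⊤ : Subgroup F).lowerCentralSeries (n + 1 + 1) with hNn
    set π : F →* F ⧸ Nn := QuotientGroup.mk' Nn with hπ
    have hker : π.ker = Nn := QuotientGroup.ker_mk' Nn
    have hsurj : Function.Surjective π := QuotientGroup.mk'_surjective Nn
    set K := Subgroup.closure
        ((Nn : Set F) ∪
          {w : F | ∃ js : Fin (n + 1 + 1) → J,
            w = simpleCommList (List.ofFn fun t => FreeGroup.of (js t))}) with hK
    have hNK : Nn ≤ K := fun x hx => Subgroup.subset_closure (Or.inl hx)
    have hKle : K ≤ (⊤ : Subgroup F).lowerCentralSeries (n + 1) := by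
      rw [hK]
      apply (Subgroup.closure_le _).2
      rintro w (hw | ⟨js, rfl⟩)
      · exact (⊤ : Subgroup F).lowerCentralSeries_antitone (Nat.le_succ (n + 1)) hw
      · exact simpleCommList_mem _ _ (by simp)
    -- centrality of image of L(n+1)
    have hcent : ∀ c ∈ (⊤ : Subgroup F).lowerCentralSeries (n + 1), π c ∈ Subgroup.center (F ⧸ Nn) := by
      intro c hc
      rw [Subgroup.mem_center_iff]
      intro q
      obtain ⟨v, rfl⟩ := hsurj q
      have h2 : grpComm c v ∈ Nn := grpComm_mem_lcs hc v
      have h3 : π (grpComm c v) = 1 := by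
        rw [← MonoidHom.mem_ker, hker]; exact h2
      have h4 : c * v = v * c * grpComm c v := by simp [grpComm]; group
      calc π v * π c = π (v * c) := (map_mul π v c).symm
        _ = π (v * c) * π (grpComm c v) := by rw [h3, mul_one]
        _ = π (v * c * grpComm c v) := (map_mul _ _ _).symm
        _ = π (c * v) := by rw [← h4]
        _ = π c * π v := map_mul π c v
    have hcomm_cent : ∀ b ∈ (⊤ : Subgroup F).lowerCentralSeries n, ∀ y : F ⧸ Nn,
        ⁅π b, y⁆ ∈ Subgroup.center (F ⧸ Nn) := by
      intro b hb y
      obtain ⟨v, rfl⟩ := hsurj y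
      rw [← map_commutatorElement]
      apply hcent
      show _ ∈ ⁅(⊤ : Subgroup F).lowerCentralSeries n, (⊤ : Subgroup F)⁆
      exact Subgroup.commutator_mem_commutator hb (Subgroup.mem_top _)
    have hcentM : ∀ a ∈ Subgroup.map π ((⊤ : Subgroup F).lowerCentralSeries n), ∀ y : F ⧸ Nn,
        ⁅a, y⁆ ∈ Subgroup.center (F ⧸ Nn) := by
      rintro a ⟨b, hb, rfl⟩ y
      exact hcomm_cent b hb y
    -- Lemma A
    have lemA : ∀ a ∈ Subgroup.map π ((⊤ : Subgroup F).lowerCentralSeries n), ∀ j : J,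
        ⁅a, π (FreeGroup.of j)⁆ ∈ Subgroup.map π K := by
      intro a ha j
      rw [ih, MonoidHom.map_closure] at ha
      induction ha using Subgroup.closure_induction with
      | mem w hw =>
        obtain ⟨u, hu, rfl⟩ := hw
        rcases hu with hu | ⟨js, rfl⟩
        · -- u ∈ L(n+1): π u is central, commutator is 1
          have : ⁅π u, π (FreeGroup.of j)⁆ = 1 := by
            apply commutatorElement_eq_one_iff_commute.2
            exact (Subgroup.mem_center_iff.1 (hcent u hu) (π (FreeGroup.of j))).symm
          rw [this]; exact one_mem _
        · -- u is a simple commutator of weight n+1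
          set s := simpleCommList (List.ofFn fun t => FreeGroup.of (js t)) with hs
          have hsLn : s ∈ (⊤ : Subgroup F).lowerCentralSeries n := simpleCommList_mem _ _ (by simp)
          have hgK : grpComm s (FreeGroup.of j) ∈ K := by
            apply Subgroup.subset_closure
            right
            refine ⟨Fin.snoc js j, ?_⟩
            rw [← simpleCommList_ofFn_snoc (fun t => FreeGroup.of (js t)) (FreeGroup.of j)]
            congr 1
            apply congrArg List.ofFn
            funext t
            refine Fin.lastCases ?_ (fun i => ?_) t <;>
              simp [Fin.snoc_castSucc, Fin.snoc_last]
          have heq : ⁅π s, π (FreeGroup.of j)⁆ = π (grpComm s (FreeGroup.of j)) := by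
            rw [grpComm_eq_commutator, map_commutatorElement, map_inv, map_inv]
            set a := π s
            set x := π (FreeGroup.of j)
            have hc1 : ⁅a, x⁆ ∈ Subgroup.center (F ⧸ Nn) := hcomm_cent s hsLn x
            have hc2 : ⁅a, x⁻¹⁆ ∈ Subgroup.center (F ⧸ Nn) := hcomm_cent s hsLn x⁻¹
            have e1 : ⁅a, x⁻¹⁆ = ⁅a, x⁆⁻¹ := by
              rw [comm_inv_right, conj_central' (Subgroup.inv_mem _ hc1)]
            have e2 : ⁅a⁻¹, x⁻¹⁆ = ⁅a, x⁻¹⁆⁻¹ := by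
              rw [comm_inv_left, conj_central' (Subgroup.inv_mem _ hc2)]
            rw [e2, e1, inv_inv]
          rw [heq]
          exact Subgroup.mem_map_of_mem π hgK
      | one =>
        rw [commutatorElement_one_left]; exact one_mem _
      | mul x y hx hy px py =>
        have hmx : x ∈ Subgroup.map π ((⊤ : Subgroup F).lowerCentralSeries n) := by
          rw [ih, MonoidHom.map_closure]; exact hx
        have hmy : y ∈ Subgroup.map π ((⊤ : Subgroup F).lowerCentralSeries n) := by
          rw [ih, MonoidHom.map_closure]; exact hy
        rw [comm_mul_left, conj_central (hcentM y hmy _)]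
        exact mul_mem py px
      | inv x hx px =>
        have hmx : x ∈ Subgroup.map π ((⊤ : Subgroup F).lowerCentralSeries n) := by
          rw [ih, MonoidHom.map_closure]; exact hx
        rw [comm_inv_left, conj_central' (Subgroup.inv_mem _ (hcentM x hmx _))]
        exact inv_mem px
    -- Lemma B
    have lemB : ∀ a ∈ Subgroup.map π ((⊤ : Subgroup F).lowerCentralSeries n), ∀ x : F ⧸ Nn,
        ⁅a, x⁆ ∈ Subgroup.map π K := by
      intro a ha x
      have htop : Subgroup.closure (π '' Set.range (FreeGroup.of : J → F)) = ⊤ := by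
        rw [← MonoidHom.map_closure, FreeGroup.closure_range_of,
          Subgroup.map_top_of_surjective π hsurj]
      have hx : x ∈ Subgroup.closure (π '' Set.range (FreeGroup.of : J → F)) := by
        rw [htop]; exact Subgroup.mem_top x
      induction hx using Subgroup.closure_induction with
      | mem y hy =>
        obtain ⟨w, ⟨j, rfl⟩, rfl⟩ := hy
        exact lemA a ha j
      | one =>
        rw [commutatorElement_one_right]; exact one_mem _
      | mul x y hx hy px py =>
        rw [comm_mul_right, conj_central (hcentM a ha y)]
        exact mul_mem px py
      | inv x hx px =>
        rw [comm_inv_right, conj_central' (Subgroup.inv_mem _ (hcentM a ha x))]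
        exact inv_mem px
    -- finish
    apply le_antisymm _ hKle
    intro g hg
    have h1 : π g ∈ Subgroup.map π ((⊤ : Subgroup F).lowerCentralSeries (n + 1)) :=
      Subgroup.mem_map_of_mem π hg
    have hsucc : (⊤ : Subgroup F).lowerCentralSeries (n + 1) = ⁅(⊤ : Subgroup F).lowerCentralSeries n, (⊤ : Subgroup F)⁆ := rfl
    rw [hsucc, Subgroup.map_commutator, Subgroup.map_top_of_surjective π hsurj] at h1
    have h2 : π g ∈ Subgroup.map π K :=
      (Subgroup.commutator_le.2 fun a ha x _ => lemB a ha x) h1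
    have h3 : g ∈ Subgroup.comap π (Subgroup.map π K) := Subgroup.mem_comap.2 h2
    rwa [Subgroup.comap_map_eq, hker, sup_eq_left.mpr hNK] at h3

/-- In a free group `F` on generators `{x_j}_{j ∈ J}`, for every `d ≥ 1` the term
`γ_d(F)` of the lower central series is generated by `γ_{d+1}(F)` together with the
simple commutators `[x_{j₁}, …, x_{j_d}]` of weight `d` in the free generators.
(Recall `γ_d(F) = lowerCentralSeries F (d-1)`.) -/
theorem lowerCentralSeries_freeGroup_generated_by_simple_commutators
    (J : Type*) (d : ℕ) (hd : 1 ≤ d) :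
    (⊤ : Subgroup (FreeGroup J)).lowerCentralSeries (d - 1) =
      Subgroup.closure
        (((⊤ : Subgroup (FreeGroup J)).lowerCentralSeries d : Set (FreeGroup J)) ∪
          {w : FreeGroup J | ∃ js : Fin d → J,
            w = simpleCommList (List.ofFn fun t => FreeGroup.of (js t))}) := by
  obtain ⟨n, rfl⟩ : ∃ n, d = n + 1 := ⟨d - 1, by omega⟩
  simpa using lcs_free_eq J n
end

section
/- Fix n ≥ 1 and 1 ≤ i ≤ n, and let ξ_i : ℤ⟨X₁, …, X_n⟩ → ℤ⟨X₁, …, X_{n+1}⟩ be the ℤ-algebra homomorphism with ξ_i(X_k) = X_k for k < i, ξ_i(X_i) = X_i + X_{i+1}, and ξ_i(X_k) = X_{k+1} for k > i. Let d ≥ 1 and let F ∈ ℤ⟨X₁, …, X_n⟩ be a nonzero homogeneous element of degree d (a ℤ-linear combination of words of length d). Let M be the lexicographically smallest word of length d (with respect to X₁ < X₂ < ⋯) having nonzero coefficient c in F. Then ξ_i(F) is a nonzero homogeneous element of degree d, the lexicographically smallest length-d word with nonzero coefficient in ξ_i(F) is the minimal i-successor of M, and its coefficient in ξ_i(F) equals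 c. -/
/-- The coefficient of the word `w` in the basis expansion of an element of the free
associative `ℤ`-algebra (whose words form a `ℤ`-basis). -/
noncomputable def coeffWord {X : Type*} (F : FreeAlgebra ℤ X) (w : List X) : ℤ :=
  (FreeAlgebra.equivMonoidAlgebraFreeMonoid F).coeff (FreeMonoid.ofList w)

/-- The `ℤ`-algebra homomorphism `ξᵢ : ℤ⟨X₁, …, Xₙ⟩ → ℤ⟨X₁, …, Xₙ₊₁⟩` with
`ξᵢ(Xₖ) = Xₖ` for `k < i`, `ξᵢ(Xᵢ) = Xᵢ + Xᵢ₊₁`, and `ξᵢ(Xₖ) = Xₖ₊₁` for `k > i`. -/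
noncomputable def xi (n : ℕ) (i : Fin n) :
    FreeAlgebra ℤ (Fin n) →ₐ[ℤ] FreeAlgebra ℤ (Fin (n + 1)) :=
  FreeAlgebra.lift ℤ fun k =>
    if k < i then FreeAlgebra.ι ℤ k.castSucc
    else if k = i then FreeAlgebra.ι ℤ i.castSucc + FreeAlgebra.ι ℤ i.succ
    else FreeAlgebra.ι ℤ k.succ

/-- The minimal `i`-successor of a word: every occurrence of `Xᵢ` is kept as `Xᵢ`, and
every `Xₖ` with `k > i` is replaced by `Xₖ₊₁`. -/
def minimalISucc {n : ℕ} (i : Fin n) (w : List (Fin n)) : List (Fin (n + 1)) :=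
  w.map fun k => if k ≤ i then k.castSucc else k.succ

/-! ### Auxiliary machinery -/

section Aux

variable {n : ℕ}

/-- The "shrink" map recovering the original letter from a successor letter. -/
def shrinkL (i : Fin n) (j : Fin (n + 1)) : Fin n :=
  if h : (j : ℕ) ≤ (i : ℕ) then ⟨j, h.trans_lt i.isLt⟩
  else ⟨(j : ℕ) - 1, by have := j.isLt; omega⟩

/-- The minimal successor letter. -/
def minL (i : Fin n) (a : Fin n) : Fin (n + 1) :=
  if a ≤ i then a.castSucc else a.succ

lemma minimalISucc_eq_map (i : Fin n) (w : List (Fin n)) :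
    minimalISucc i w = w.map (minL i) := rfl

/-- `j` is a successor letter of `a`. -/
def succRelL (i : Fin n) (a : Fin n) (j : Fin (n + 1)) : Prop :=
  (a ≤ i ∧ j = a.castSucc) ∨ (i ≤ a ∧ j = a.succ)

lemma shrinkL_minL (i : Fin n) (a : Fin n) : shrinkL i (minL i a) = a := by
  unfold shrinkL minL
  have hi := i.isLt
  have ha := a.isLt
  rcases le_or_gt a i with h | h
  · rw [if_pos h]
    rw [Fin.le_def] at h
    rw [dif_pos (by simpa using h)]
    simp [Fin.ext_iff]
  · rw [if_neg (not_le.mpr h)]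
    rw [Fin.lt_def] at h
    rw [dif_neg (by simp; omega)]
    simp [Fin.ext_iff]

lemma succRelL_shrinkL (i : Fin n) (j : Fin (n + 1)) : succRelL i (shrinkL i j) j := by
  unfold succRelL shrinkL
  have hi := i.isLt
  have hj := j.isLt
  split_ifs with h
  · left
    exact ⟨by simpa [Fin.le_def] using h, by simp [Fin.ext_iff]⟩
  · right
    refine ⟨by simp [Fin.le_def]; omega, by simp [Fin.ext_iff]; omega⟩

lemma succRelL_minL (i : Fin n) (a : Fin n) : succRelL i a (minL i a) := by
  unfold succRelL minL
  split_ifs with h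
  · exact Or.inl ⟨h, rfl⟩
  · exact Or.inr ⟨le_of_not_ge h, rfl⟩

lemma minL_le_of_succRelL {i a : Fin n} {j : Fin (n + 1)} (h : succRelL i a j) :
    minL i a ≤ j := by
  unfold minL
  rcases h with ⟨h, rfl⟩ | ⟨h, rfl⟩ <;> split_ifs <;>
    simp only [Fin.le_def, Fin.coe_castSucc, Fin.val_succ, not_le] at * <;> omega

lemma succRelL_lt {i a b : Fin n} {j j' : Fin (n + 1)} (hab : a < b)
    (hj : succRelL i a j) (hj' : succRelL i b j') : j < j' := by
  unfold succRelL at hj hj'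
  rcases hj with ⟨h, rfl⟩ | ⟨h, rfl⟩ <;> rcases hj' with ⟨h', rfl⟩ | ⟨h', rfl⟩ <;>
    simp only [Fin.lt_def, Fin.le_def, Fin.coe_castSucc, Fin.val_succ] at hab h h' ⊢ <;> omega

lemma shrinkL_eq_iff_lt {i a : Fin n} (h : a < i) (b : Fin (n + 1)) :
    shrinkL i b = a ↔ b = a.castSucc := by
  unfold shrinkL
  have hb := b.isLt
  rw [Fin.lt_def] at h
  split_ifs with h' <;> simp [Fin.ext_iff] <;> omega

lemma shrinkL_eq_iff_gt {i a : Fin n} (h : i < a) (b : Fin (n + 1)) :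
    shrinkL i b = a ↔ b = a.succ := by
  unfold shrinkL
  have hb := b.isLt
  have ha := a.isLt
  rw [Fin.lt_def] at h
  split_ifs with h' <;> simp [Fin.ext_iff] <;> omega

lemma shrinkL_eq_iff_eq {i : Fin n} (b : Fin (n + 1)) :
    shrinkL i b = i ↔ b = i.castSucc ∨ b = i.succ := by
  unfold shrinkL
  have hb := b.isLt
  have hi := i.isLt
  split_ifs with h' <;> simp [Fin.ext_iff] <;> omega

lemma forall₂_shrinkL (i : Fin n) (w : List (Fin (n + 1))) :
    List.Forall₂ (succRelL i) (w.map (shrinkL i)) w := by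
  induction w with
  | nil => exact List.Forall₂.nil
  | cons b w ih => exact List.Forall₂.cons (succRelL_shrinkL i b) ih

/-! ### Lex lemmas -/

lemma lexA {i : Fin n} : ∀ {w : List (Fin n)} {v : List (Fin (n + 1))},
    List.Forall₂ (succRelL i) w v →
    minimalISucc i w = v ∨ List.Lex (· < ·) (minimalISucc i w) v := by
  intro w v h
  induction h with
  | nil => exact Or.inl rfl
  | @cons a j l₁ l₂ ha h ih =>
    rw [minimalISucc_eq_map, List.map_cons]
    rcases (minL_le_of_succRelL ha).lt_or_eq with hlt | heq
    · exact Or.inr (List.Lex.rel hlt)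
    · rw [heq]
      rcases ih with h' | h'
      · rw [minimalISucc_eq_map] at h'
        exact Or.inl (by rw [h'])
      · rw [minimalISucc_eq_map] at h'
        exact Or.inr (List.Lex.cons h')

lemma lexB {i : Fin n} : ∀ {M w : List (Fin n)}, List.Lex (· < ·) M w →
    ∀ {v : List (Fin (n + 1))}, List.Forall₂ (succRelL i) w v →
    List.Lex (· < ·) (minimalISucc i M) v := by
  intro M w h
  induction h with
  | nil =>
    intro v hv
    cases hv with
    | cons hbj htl => exact List.Lex.nil
  | @rel a l₁ b l₂ hab =>
    intro v hv
    cases hv with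
    | cons hbj htl =>
      rw [minimalISucc_eq_map, List.map_cons]
      exact List.Lex.rel (succRelL_lt hab (succRelL_minL i a) hbj)
  | @cons a l₁ l₂ h ih =>
    intro v hv
    cases hv with
    | cons haj htl =>
      rw [minimalISucc_eq_map, List.map_cons]
      rcases (minL_le_of_succRelL haj).lt_or_eq with hlt | heq
      · exact List.Lex.rel hlt
      · rw [heq]
        have := ih htl
        rw [minimalISucc_eq_map] at this
        exact List.Lex.cons this

/-! ### Coefficient lemmas -/

lemma e_iota {X : Type*} (x : X) :
    FreeAlgebra.equivMonoidAlgebraFreeMonoid (FreeAlgebra.ι ℤ x) =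
      MonoidAlgebra.single (FreeMonoid.of x) 1 := by
  simp [FreeAlgebra.equivMonoidAlgebraFreeMonoid, MonoidAlgebra.of_apply]

lemma coeffWord_one {X : Type*} [DecidableEq X] (v : List X) :
    coeffWord (1 : FreeAlgebra ℤ X) v = if v = [] then 1 else 0 := by
  classical
  unfold coeffWord
  rw [map_one, MonoidAlgebra.one_def, MonoidAlgebra.coeff_single, Finsupp.single_apply]
  split_ifs with h1 h2 h2
  · rfl
  · exact absurd (congrArg FreeMonoid.toList h1).symm h2
  · subst h2; exact absurd rfl h1
  · rfl

lemma coeffWord_iota_mul_cons {X : Type*} [DecidableEq X] (x b : X) (v : List X)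
    (G : FreeAlgebra ℤ X) :
    coeffWord (FreeAlgebra.ι ℤ x * G) (b :: v) = if b = x then coeffWord G v else 0 := by
  unfold coeffWord
  rw [map_mul, e_iota]
  by_cases hb : b = x
  · subst hb
    rw [if_pos rfl, MonoidAlgebra.single_mul_apply_aux _ (fun a _ => ?_), one_mul]
    constructor
    · intro h
      have h2 := congrArg FreeMonoid.toList h
      simp [FreeMonoid.toList_mul] at h2
      exact FreeMonoid.toList.injective (by simpa using h2)
    · rintro rfl
      rfl
  · rw [if_neg hb]
    apply MonoidAlgebra.single_mul_apply_of_not_exists_mul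
    rintro ⟨d, hd⟩
    have h2 := congrArg FreeMonoid.toList hd
    simp [FreeMonoid.toList_mul] at h2
    exact hb h2.1

lemma coeffWord_iota_mul_nil {X : Type*} (x : X) (G : FreeAlgebra ℤ X) :
    coeffWord (FreeAlgebra.ι ℤ x * G) [] = 0 := by
  unfold coeffWord
  rw [map_mul, e_iota]
  apply MonoidAlgebra.single_mul_apply_of_not_exists_mul
  rintro ⟨d, hd⟩
  have h2 := congrArg FreeMonoid.toList hd
  simp [FreeMonoid.toList_mul] at h2

lemma coeffWord_zero {X : Type*} (v : List X) : coeffWord (0 : FreeAlgebra ℤ X) v = 0 := by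
  simp [coeffWord]

lemma coeffWord_add {X : Type*} (F G : FreeAlgebra ℤ X) (v : List X) :
    coeffWord (F + G) v = coeffWord F v + coeffWord G v := by
  unfold coeffWord
  rw [map_add, MonoidAlgebra.coeff_add, Finsupp.add_apply]

lemma coeffWord_smul {X : Type*} (c : ℤ) (F : FreeAlgebra ℤ X) (v : List X) :
    coeffWord (c • F) v = c * coeffWord F v := by
  unfold coeffWord
  rw [map_smul, MonoidAlgebra.coeff_smul, Finsupp.smul_apply, smul_eq_mul]

/-- The monomial (word) element. -/
noncomputable def monoW {X : Type*} (u : List X) : FreeAlgebra ℤ X :=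
  (u.map (FreeAlgebra.ι ℤ)).prod

lemma e_monoW {X : Type*} (u : List X) :
    FreeAlgebra.equivMonoidAlgebraFreeMonoid (monoW u) =
      MonoidAlgebra.single (FreeMonoid.ofList u) 1 := by
  induction u with
  | nil =>
    show FreeAlgebra.equivMonoidAlgebraFreeMonoid (1 : FreeAlgebra ℤ X) = _
    rw [map_one, MonoidAlgebra.one_def]
    rfl
  | cons a u ih =>
    have : monoW (a :: u) = FreeAlgebra.ι ℤ a * monoW u := by
      simp [monoW]
    rw [this, map_mul, e_iota, ih, MonoidAlgebra.single_mul_single, one_mul]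
    rfl

lemma coeffWord_monoW {X : Type*} [DecidableEq X] (u v : List X) :
    coeffWord (monoW u) v = if v = u then 1 else 0 := by
  classical
  unfold coeffWord
  rw [e_monoW, MonoidAlgebra.coeff_single, Finsupp.single_apply]
  split_ifs with h1 h2 h2
  · rfl
  · exact absurd (congrArg FreeMonoid.toList h1).symm h2
  · subst h2; exact absurd rfl h1
  · rfl

variable {n : ℕ}

lemma xi_iota (i : Fin n) (a : Fin n) :
    xi n i (FreeAlgebra.ι ℤ a) =
      if a < i then FreeAlgebra.ι ℤ a.castSucc
      else if a = i then FreeAlgebra.ι ℤ i.castSucc + FreeAlgebra.ι ℤ i.succ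
      else FreeAlgebra.ι ℤ a.succ := by
  simp [xi]

lemma coeffWord_xi_iota_mul_nil (i : Fin n) (a : Fin n) (G : FreeAlgebra ℤ (Fin (n + 1))) :
    coeffWord (xi n i (FreeAlgebra.ι ℤ a) * G) [] = 0 := by
  rw [xi_iota]
  split_ifs with h1 h2
  · exact coeffWord_iota_mul_nil _ _
  · rw [add_mul, coeffWord_add, coeffWord_iota_mul_nil, coeffWord_iota_mul_nil]
    rfl
  · exact coeffWord_iota_mul_nil _ _

lemma coeffWord_xi_iota_mul_cons (i : Fin n) (a : Fin n) (b : Fin (n + 1))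
    (v : List (Fin (n + 1))) (G : FreeAlgebra ℤ (Fin (n + 1))) :
    coeffWord (xi n i (FreeAlgebra.ι ℤ a) * G) (b :: v) =
      if shrinkL i b = a then coeffWord G v else 0 := by
  rw [xi_iota]
  rcases lt_trichotomy a i with h | h | h
  · rw [if_pos h, coeffWord_iota_mul_cons]
    rw [if_congr ((shrinkL_eq_iff_lt h b).symm) rfl rfl]
  · subst h
    rw [if_neg (lt_irrefl a), if_pos rfl, add_mul, coeffWord_add,
      coeffWord_iota_mul_cons, coeffWord_iota_mul_cons]
    have hne : a.castSucc ≠ a.succ := by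
      simp [Fin.ext_iff]
    by_cases h1 : b = a.castSucc
    · rw [if_pos h1, if_neg (h1 ▸ hne ∘ Eq.symm ∘ Eq.symm), if_pos]
      · ring
      · exact (shrinkL_eq_iff_eq b).mpr (Or.inl h1)
    · by_cases h2 : b = a.succ
      · rw [if_neg h1, if_pos h2, if_pos]
        · ring
        · exact (shrinkL_eq_iff_eq b).mpr (Or.inr h2)
      · rw [if_neg h1, if_neg h2, if_neg]
        · ring
        · intro hc
          rcases (shrinkL_eq_iff_eq b).mp hc with hc | hc
          · exact h1 hc
          · exact h2 hc
  · rw [if_neg (not_lt.mpr h.le), if_neg (ne_of_gt h), coeffWord_iota_mul_cons]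
    rw [if_congr ((shrinkL_eq_iff_gt h b).symm) rfl rfl]

lemma coeffWord_xi_monoW (i : Fin n) :
    ∀ (u : List (Fin n)) (v : List (Fin (n + 1))),
      coeffWord (xi n i (monoW u)) v = if v.map (shrinkL i) = u then 1 else 0 := by
  intro u
  induction u with
  | nil =>
    intro v
    have : monoW ([] : List (Fin n)) = 1 := rfl
    rw [this, map_one]
    cases v with
    | nil => simp [coeffWord_one]
    | cons b v' => simp [coeffWord_one]
  | cons a u ih =>
    intro v
    have hm : monoW (a :: u) = FreeAlgebra.ι ℤ a * monoW u := by simp [monoW]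
    rw [hm, map_mul]
    cases v with
    | nil => rw [coeffWord_xi_iota_mul_nil]; simp
    | cons b v' =>
      rw [coeffWord_xi_iota_mul_cons, ih]
      simp only [List.map_cons, List.cons.injEq]
      by_cases h1 : shrinkL i b = a <;> by_cases h2 : v'.map (shrinkL i) = u <;>
        simp [h1, h2]

lemma coeffWord_xi (i : Fin n) (F : FreeAlgebra ℤ (Fin n)) (v : List (Fin (n + 1))) :
    coeffWord (xi n i F) v = coeffWord F (v.map (shrinkL i)) := by
  obtain ⟨f, rfl⟩ := FreeAlgebra.equivMonoidAlgebraFreeMonoid.symm.surjective F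
  induction f using MonoidAlgebra.induction_linear with
  | zero => simp [coeffWord_zero]
  | add f g hf hg =>
    rw [map_add, map_add, coeffWord_add, coeffWord_add, hf, hg]
  | single u c =>
    have h2 : MonoidAlgebra.single u c =
        FreeAlgebra.equivMonoidAlgebraFreeMonoid (c • monoW (FreeMonoid.toList u)) := by
      rw [map_smul, e_monoW, FreeMonoid.ofList_toList]
      simp [MonoidAlgebra.smul_single]
    rw [h2, AlgEquiv.symm_apply_apply, map_smul, coeffWord_smul, coeffWord_smul,
      coeffWord_xi_monoW, coeffWord_monoW]

end Aux

/-- If `F` is a nonzero homogeneous element of degree `d` of `ℤ⟨X₁, …, Xₙ⟩` whose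
lexicographically smallest length-`d` word `M` with nonzero coefficient has coefficient
`c`, then `ξᵢ(F)` is nonzero and homogeneous of degree `d`, its lexicographically
smallest length-`d` word with nonzero coefficient is the minimal `i`-successor of `M`,
and the coefficient of that word in `ξᵢ(F)` equals `c`. -/
theorem xi_smallest_word (n : ℕ) (i : Fin n) (d : ℕ) (hd : 1 ≤ d)
    (F : FreeAlgebra ℤ (Fin n)) (hF : F ≠ 0)
    (hhom : ∀ w : List (Fin n), coeffWord F w ≠ 0 → w.length = d)
    (M : List (Fin n)) (hMlen : M.length = d) (hM : coeffWord F M ≠ 0)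
    (hMmin : ∀ w : List (Fin n), w.length = d → coeffWord F w ≠ 0 →
      M = w ∨ List.Lex (· < ·) M w) :
    xi n i F ≠ 0 ∧
    (∀ w : List (Fin (n + 1)), coeffWord (xi n i F) w ≠ 0 → w.length = d) ∧
    coeffWord (xi n i F) (minimalISucc i M) = coeffWord F M ∧
    coeffWord (xi n i F) (minimalISucc i M) ≠ 0 ∧
    ∀ w : List (Fin (n + 1)), w.length = d → coeffWord (xi n i F) w ≠ 0 →
      minimalISucc i M = w ∨ List.Lex (· < ·) (minimalISucc i M) w := by
  have key : ∀ v : List (Fin (n + 1)),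
      coeffWord (xi n i F) v = coeffWord F (v.map (shrinkL i)) := coeffWord_xi i F
  have hmap : (minimalISucc i M).map (shrinkL i) = M := by
    rw [minimalISucc_eq_map, List.map_map]
    have hcomp : (shrinkL i) ∘ (minL i) = id := funext (shrinkL_minL i)
    rw [hcomp, List.map_id]
  have part3 : coeffWord (xi n i F) (minimalISucc i M) = coeffWord F M := by
    rw [key, hmap]
  have part4 : coeffWord (xi n i F) (minimalISucc i M) ≠ 0 := by rw [part3]; exact hM
  refine ⟨?_, ?_, part3, part4, ?_⟩
  · intro h
    rw [h] at part4
    exact part4 (coeffWord_zero _)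
  · intro w hw
    rw [key] at hw
    have := hhom _ hw
    rwa [List.length_map] at this
  · intro w hwlen hw
    rw [key] at hw
    have hlen : (w.map (shrinkL i)).length = d := by rwa [List.length_map]
    have hfa := forall₂_shrinkL i w
    rcases hMmin _ hlen hw with h | h
    · rw [← h] at hfa
      exact lexA hfa
    · exact Or.inr (lexB h hfa)
end
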